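/- arXiv:1712.01064 — 6 statements merged into one kernel-verified Lean document; each statement's English description precedes it below -/
import Mathlib

section
/- Hölder's inequality for iterated weak norms: suppose 0 < p_i, q_i, r_i < ∞ with 1/r_i = 1/p_i + 1/q_i for i = 1, 2. Then for all measurable functions f, g on ℝ^n × ℝ^m, ‖ f·g ‖_{L^{r2,∞}(L^{r1,∞})} ≤ C_{p⃗,q⃗} · ‖f‖_{L^{p2,∞}(L^{p1,∞})} · ‖g‖_{L^{q2,∞}(L^{q1,∞})}, where C_{p⃗,q⃗} = ∏_{i=1}^{2} (p_i/r_i)^{1/p_i} (q_i/r_i)^{1/q_i} and f·g denotes the pointwise product. -/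
open MeasureTheory ENNReal Filter Topology Set

noncomputable section

/-- `ℝ^n` with the Euclidean norm and Lebesgue measure. -/
abbrev Euc (n : ℕ) : Type := EuclideanSpace ℝ (Fin n)

/-- The weak `L^q` quasi-norm `sup_{λ>0} λ·μ{x : |h x| > λ}^{1/q}`. -/
def weakNorm {α : Type*} [MeasurableSpace α] (μ : Measure α) (q : ℝ) (h : α → ℝ) : ℝ≥0∞ :=
  ⨆ (l : ℝ) (_ : 0 < l), ENNReal.ofReal l * μ {x | l < |h x|} ^ (1 / q)

/-- The strong `L^q` norm `(∫ |h|^q)^{1/q}`. -/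
def strongNorm {α : Type*} [MeasurableSpace α] (μ : Measure α) (q : ℝ) (h : α → ℝ) : ℝ≥0∞ :=
  (∫⁻ x, ENNReal.ofReal |h x| ^ q ∂μ) ^ (1 / q)

/-- The mixed norm `‖f‖_{L^{(p1,p2)}}` on `ℝ^n × ℝ^m` (inner exponent `p1` in `x`,
outer exponent `p2` in `y`). -/
def mixedNorm {n m : ℕ} (p1 p2 : ℝ) (f : Euc n × Euc m → ℝ) : ℝ≥0∞ :=
  (∫⁻ y : Euc m, (∫⁻ x : Euc n, ENNReal.ofReal |f (x, y)| ^ p1) ^ (p2 / p1)) ^ (1 / p2)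

/-- The mixed weak norm `‖f‖_{L^{(p1,p2),∞}} = sup_{λ>0} λ·‖χ_{{|f|>λ}}‖_{L^{(p1,p2)}}`. -/
def mixedWeakNorm {n m : ℕ} (p1 p2 : ℝ) (f : Euc n × Euc m → ℝ) : ℝ≥0∞ :=
  ⨆ (l : ℝ) (_ : 0 < l), ENNReal.ofReal l *
    mixedNorm p1 p2 ({z | l < |f z|}.indicator fun _ => (1 : ℝ))

/-- The iterated weak norm `‖f‖_{L^{p2,∞}(L^{p1,∞})}`: the weak `L^{p2}` quasi-norm in `y`
of the weak `L^{p1}` quasi-norm in `x`. -/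
def iteratedWeakNorm {n m : ℕ} (p1 p2 : ℝ) (f : Euc n × Euc m → ℝ) : ℝ≥0∞ :=
  ⨆ (l : ℝ) (_ : 0 < l), ENNReal.ofReal l *
    volume {y : Euc m | ENNReal.ofReal l < weakNorm volume p1 fun x => f (x, y)} ^ (1 / p2)

/-- The mixed weak norm for `[0,∞]`-valued functions. -/
def mixedWeakNormE {n m : ℕ} (p1 p2 : ℝ) (f : Euc n × Euc m → ℝ≥0∞) : ℝ≥0∞ :=
  ⨆ (l : ℝ) (_ : 0 < l), ENNReal.ofReal l *
    mixedNorm p1 p2 ({z | ENNReal.ofReal l < f z}.indicator fun _ => (1 : ℝ))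

lemma real_key {p q r a b lam : ℝ} (hp : 0 < p) (hq : 0 < q) (hr : 0 < r)
    (hpqr : 1 / r = 1 / p + 1 / q) (ha : 0 < a) (hb : 0 < b) (hlam : 0 < lam) :
    ∃ s : ℝ, 0 < s ∧
      lam * ((a / s) ^ p + (b * s / lam) ^ q) ^ (1 / r) =
        (p / r) ^ (1 / p) * (q / r) ^ (1 / q) * (a * b) := by
  have hpq : 0 < p + q := by linarith
  have hrval : r * (p + q) = p * q := by
    field_simp at hpqr ⊢
    linarith
  have hpqr' : 1 / r = 1 / p + 1 / q := by field_simp; linarith [hrval]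
  set s0 : ℝ := p / q * a ^ p * lam ^ q / b ^ q with hs0def
  have hap : (0:ℝ) < a ^ p := Real.rpow_pos_of_pos ha p
  have hbq : (0:ℝ) < b ^ q := Real.rpow_pos_of_pos hb q
  have hlq : (0:ℝ) < lam ^ q := Real.rpow_pos_of_pos hlam q
  have hs0 : 0 < s0 := by positivity
  set s : ℝ := s0 ^ (1 / (p + q)) with hsdef
  have hs : 0 < s := Real.rpow_pos_of_pos hs0 _
  refine ⟨s, hs, ?_⟩
  have hlogs : Real.log s = (1 / (p + q)) * Real.log s0 := Real.log_rpow hs0 _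
  have hlogs0 : Real.log s0 =
      Real.log p - Real.log q + p * Real.log a + q * Real.log lam - q * Real.log b := by
    rw [hs0def, Real.log_div (by positivity) hbq.ne', Real.log_mul (by positivity) hlq.ne',
      Real.log_mul (by positivity) hap.ne', Real.log_div hp.ne' hq.ne',
      Real.log_rpow ha, Real.log_rpow hlam, Real.log_rpow hb]
  have hlogr : Real.log r = Real.log p + Real.log q - Real.log (p + q) := by
    have := congrArg Real.log hrval
    rw [Real.log_mul hr.ne' hpq.ne', Real.log_mul hp.ne' hq.ne'] at this
    linarith
  have has : (0:ℝ) < a / s := by positivity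
  have hasp : (0:ℝ) < (a / s) ^ p := Real.rpow_pos_of_pos has p
  have hT : (b * s / lam) ^ q = p / q * (a / s) ^ p := by
    have h1 : (0:ℝ) < (b * s / lam) ^ q := Real.rpow_pos_of_pos (by positivity) _
    have h2 : (0:ℝ) < p / q * (a / s) ^ p := by positivity
    refine Real.log_injOn_pos (Set.mem_Ioi.2 h1) (Set.mem_Ioi.2 h2) ?_
    rw [Real.log_rpow (by positivity), Real.log_mul (by positivity) hasp.ne',
      Real.log_rpow has,
      Real.log_div (by positivity) hlam.ne', Real.log_mul hb.ne' hs.ne',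
      Real.log_div ha.ne' hs.ne', Real.log_div hp.ne' hq.ne', hlogs, hlogs0]
    field_simp
    ring
  rw [hT]
  have hsum : (a / s) ^ p + p / q * (a / s) ^ p = (p + q) / q * (a / s) ^ p := by
    field_simp; ring
  rw [hsum]
  have hL : (0:ℝ) < lam * ((p + q) / q * (a / s) ^ p) ^ (1 / r) := by
    have : (0:ℝ) < (p + q) / q * (a / s) ^ p := by positivity
    have := Real.rpow_pos_of_pos this (1 / r)
    positivity
  have hR : (0:ℝ) < (p / r) ^ (1 / p) * (q / r) ^ (1 / q) * (a * b) := by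
    have h3 := Real.rpow_pos_of_pos (show (0:ℝ) < p / r by positivity) (1 / p)
    have h4 := Real.rpow_pos_of_pos (show (0:ℝ) < q / r by positivity) (1 / q)
    positivity
  have e1 : Real.log ((p/r)^(1/p)) = (1/p) * (Real.log p - Real.log r) := by
    rw [Real.log_rpow (by positivity), Real.log_div hp.ne' hr.ne']
  have e2 : Real.log ((q/r)^(1/q)) = (1/q) * (Real.log q - Real.log r) := by
    rw [Real.log_rpow (by positivity), Real.log_div hq.ne' hr.ne']
  refine Real.log_injOn_pos (Set.mem_Ioi.2 hL) (Set.mem_Ioi.2 hR) ?_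
  rw [Real.log_mul hlam.ne' (Real.rpow_pos_of_pos (by positivity) _).ne',
    Real.log_rpow (by positivity),
    Real.log_mul (by positivity) hasp.ne', Real.log_rpow has,
    Real.log_div ha.ne' hs.ne', Real.log_div hpq.ne' hq.ne',
    Real.log_mul (by positivity : ((p/r)^(1/p)*(q/r)^(1/q) : ℝ) ≠ 0) (by positivity : ((a*b : ℝ)) ≠ 0),
    Real.log_mul (by positivity : ((p/r)^(1/p) : ℝ) ≠ 0) (by positivity : ((q/r)^(1/q) : ℝ) ≠ 0),
    e1, e2, Real.log_mul ha.ne' hb.ne', hlogs, hlogs0, hlogr, hpqr']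
  field_simp
  ring

lemma zero_case {α : Type*} [MeasurableSpace α] (μ : Measure α) {p : ℝ} (hp : 0 < p)
    (F G : α → ℝ≥0∞)
    (hA : (⨆ (t : ℝ) (_ : 0 < t), ENNReal.ofReal t * μ {x | ENNReal.ofReal t < F x} ^ (1 / p)) = 0)
    {l : ℝ} (hl : 0 < l) :
    μ {x | ENNReal.ofReal l < F x * G x} = 0 := by
  have hterm : ∀ t : ℝ, 0 < t → μ {x | ENNReal.ofReal t < F x} = 0 := by
    intro t ht
    have h1 : ENNReal.ofReal t * μ {x | ENNReal.ofReal t < F x} ^ (1 / p) ≤ 0 := by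
      rw [← hA]
      exact le_iSup₂ (f := fun (t : ℝ) (_ : 0 < t) =>
        ENNReal.ofReal t * μ {x | ENNReal.ofReal t < F x} ^ (1 / p)) t ht
    have h2 : μ {x | ENNReal.ofReal t < F x} ^ (1 / p) = 0 := by
      by_contra h
      have := mul_ne_zero (ENNReal.ofReal_pos.2 ht).ne' h
      exact this (le_antisymm h1 zero_le)
    rcases ENNReal.rpow_eq_zero_iff.1 h2 with ⟨h3, _⟩ | ⟨_, h4⟩
    · exact h3
    · exact absurd h4 (by positivity : (0:ℝ) < 1/p).not_gt
  refine measure_mono_null (?_ : _ ⊆ ⋃ n : ℕ, {x | ENNReal.ofReal (1/(n+1)) < F x}) ?_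
  · intro x hx
    simp only [mem_setOf_eq] at hx
    have hF : F x ≠ 0 := by
      intro h0
      rw [h0, zero_mul] at hx
      exact (not_lt.2 zero_le) hx
    simp only [mem_iUnion, mem_setOf_eq]
    rcases eq_or_ne (F x) ⊤ with htop | hne
    · exact ⟨0, by simp [htop]⟩
    · have hpos : 0 < (F x).toReal := ENNReal.toReal_pos hF hne
      obtain ⟨n, hn⟩ := exists_nat_one_div_lt hpos
      refine ⟨n, ?_⟩
      calc ENNReal.ofReal (1/(n+1)) < ENNReal.ofReal (F x).toReal := by
            rw [ENNReal.ofReal_lt_ofReal_iff_of_nonneg (by positivity)]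
            exact_mod_cast hn
        _ = F x := ENNReal.ofReal_toReal hne
  · exact measure_iUnion_null fun n => hterm _ (by positivity)

lemma aux_le {α : Type*} [MeasurableSpace α] (μ : Measure α) {p q r : ℝ}
    (hp : 0 < p) (hq : 0 < q) (hr : 0 < r) (hpqr : 1 / r = 1 / p + 1 / q)
    (F G : α → ℝ≥0∞) {l : ℝ} (hl : 0 < l) :
    ENNReal.ofReal l * μ {x | ENNReal.ofReal l < F x * G x} ^ (1 / r) ≤
      ENNReal.ofReal ((p / r) ^ (1 / p) * (q / r) ^ (1 / q)) *
        ((⨆ (t : ℝ) (_ : 0 < t), ENNReal.ofReal t * μ {x | ENNReal.ofReal t < F x} ^ (1 / p)) *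
         (⨆ (t : ℝ) (_ : 0 < t), ENNReal.ofReal t * μ {x | ENNReal.ofReal t < G x} ^ (1 / q))) := by
  set A := ⨆ (t : ℝ) (_ : 0 < t), ENNReal.ofReal t * μ {x | ENNReal.ofReal t < F x} ^ (1 / p) with hAdef
  set B := ⨆ (t : ℝ) (_ : 0 < t), ENNReal.ofReal t * μ {x | ENNReal.ofReal t < G x} ^ (1 / q) with hBdef
  have hC : (0:ℝ) < (p / r) ^ (1 / p) * (q / r) ^ (1 / q) := by
    have h3 := Real.rpow_pos_of_pos (show (0:ℝ) < p / r by positivity) (1 / p)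
    have h4 := Real.rpow_pos_of_pos (show (0:ℝ) < q / r by positivity) (1 / q)
    positivity
  rcases eq_or_ne A 0 with hA0 | hA0
  · have h0 : μ {x | ENNReal.ofReal l < F x * G x} = 0 := zero_case μ hp F G (hAdef ▸ hA0) hl
    rw [h0, ENNReal.zero_rpow_of_pos (by positivity), mul_zero]
    exact zero_le
  rcases eq_or_ne B 0 with hB0 | hB0
  · have h0 : μ {x | ENNReal.ofReal l < G x * F x} = 0 := zero_case μ hq G F (hBdef ▸ hB0) hl
    have h0' : μ {x | ENNReal.ofReal l < F x * G x} = 0 := by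
      simpa [mul_comm] using h0
    rw [h0', ENNReal.zero_rpow_of_pos (by positivity), mul_zero]
    exact zero_le
  rcases eq_or_ne A ⊤ with hAt | hAt
  · rw [hAt, ENNReal.top_mul hB0, ENNReal.mul_top (ENNReal.ofReal_pos.2 hC).ne']
    exact le_top
  rcases eq_or_ne B ⊤ with hBt | hBt
  · rw [hBt, ENNReal.mul_top hA0, ENNReal.mul_top (ENNReal.ofReal_pos.2 hC).ne']
    exact le_top
  -- main case
  have ha : 0 < A.toReal := ENNReal.toReal_pos hA0 hAt
  have hb : 0 < B.toReal := ENNReal.toReal_pos hB0 hBt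
  set a := A.toReal
  set b := B.toReal
  obtain ⟨s, hs, hkey⟩ := real_key hp hq hr hpqr ha hb hl
  have hls : 0 < l / s := by positivity
  have hμF : μ {x | ENNReal.ofReal s < F x} ≤ ENNReal.ofReal ((a / s) ^ p) := by
    have h1 : ENNReal.ofReal s * μ {x | ENNReal.ofReal s < F x} ^ (1 / p) ≤ A :=
      le_iSup₂ (f := fun (t : ℝ) (_ : 0 < t) =>
        ENNReal.ofReal t * μ {x | ENNReal.ofReal t < F x} ^ (1 / p)) s hs
    have h2 : μ {x | ENNReal.ofReal s < F x} ^ (1 / p) ≤ A / ENNReal.ofReal s :=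
      (ENNReal.le_div_iff_mul_le (Or.inl (ENNReal.ofReal_pos.2 hs).ne')
        (Or.inl ENNReal.ofReal_ne_top)).2 (by rwa [mul_comm])
    calc μ {x | ENNReal.ofReal s < F x}
        = (μ {x | ENNReal.ofReal s < F x} ^ (1 / p)) ^ p := by
          rw [one_div, ENNReal.rpow_inv_rpow hp.ne']
      _ ≤ (A / ENNReal.ofReal s) ^ p := ENNReal.rpow_le_rpow h2 hp.le
      _ = ENNReal.ofReal ((a / s) ^ p) := by
          rw [← ENNReal.ofReal_toReal hAt, ← ENNReal.ofReal_div_of_pos hs,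
            ENNReal.ofReal_rpow_of_nonneg (by positivity) hp.le]
  have hμG : μ {x | ENNReal.ofReal (l / s) < G x} ≤ ENNReal.ofReal ((b * s / l) ^ q) := by
    have h1 : ENNReal.ofReal (l / s) * μ {x | ENNReal.ofReal (l / s) < G x} ^ (1 / q) ≤ B :=
      le_iSup₂ (f := fun (t : ℝ) (_ : 0 < t) =>
        ENNReal.ofReal t * μ {x | ENNReal.ofReal t < G x} ^ (1 / q)) _ hls
    have h2 : μ {x | ENNReal.ofReal (l / s) < G x} ^ (1 / q) ≤ B / ENNReal.ofReal (l / s) :=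
      (ENNReal.le_div_iff_mul_le (Or.inl (ENNReal.ofReal_pos.2 hls).ne')
        (Or.inl ENNReal.ofReal_ne_top)).2 (by rwa [mul_comm])
    have heq : b / (l / s) = b * s / l := by field_simp
    calc μ {x | ENNReal.ofReal (l / s) < G x}
        = (μ {x | ENNReal.ofReal (l / s) < G x} ^ (1 / q)) ^ q := by
          rw [one_div, ENNReal.rpow_inv_rpow hq.ne']
      _ ≤ (B / ENNReal.ofReal (l / s)) ^ q := ENNReal.rpow_le_rpow h2 hq.le
      _ = ENNReal.ofReal ((b * s / l) ^ q) := by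
          rw [← ENNReal.ofReal_toReal hBt, ← ENNReal.ofReal_div_of_pos hls, heq,
            ENNReal.ofReal_rpow_of_nonneg (by positivity) hq.le]
  have hsub : {x | ENNReal.ofReal l < F x * G x} ⊆
      {x | ENNReal.ofReal s < F x} ∪ {x | ENNReal.ofReal (l / s) < G x} := by
    intro x hx
    by_contra hc
    simp only [mem_union, mem_setOf_eq, not_or, not_lt] at hc
    obtain ⟨h1, h2⟩ := hc
    have : F x * G x ≤ ENNReal.ofReal s * ENNReal.ofReal (l / s) :=
      mul_le_mul' h1 h2
    rw [← ENNReal.ofReal_mul hs.le, mul_div_cancel₀ _ hs.ne'] at this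
    exact (not_lt.2 this) hx
  have hμ : μ {x | ENNReal.ofReal l < F x * G x} ≤
      ENNReal.ofReal ((a / s) ^ p + (b * s / l) ^ q) := by
    calc μ {x | ENNReal.ofReal l < F x * G x}
        ≤ μ ({x | ENNReal.ofReal s < F x} ∪ {x | ENNReal.ofReal (l / s) < G x}) :=
          measure_mono hsub
      _ ≤ μ {x | ENNReal.ofReal s < F x} + μ {x | ENNReal.ofReal (l / s) < G x} :=
          measure_union_le _ _
      _ ≤ _ := by
          rw [ENNReal.ofReal_add (by positivity) (by positivity)]
          exact add_le_add hμF hμG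
  calc ENNReal.ofReal l * μ {x | ENNReal.ofReal l < F x * G x} ^ (1 / r)
      ≤ ENNReal.ofReal l * ENNReal.ofReal ((a / s) ^ p + (b * s / l) ^ q) ^ (1 / r) :=
        mul_le_mul_right (ENNReal.rpow_le_rpow hμ (by positivity)) _
    _ = ENNReal.ofReal (l * ((a / s) ^ p + (b * s / l) ^ q) ^ (1 / r)) := by
        rw [ENNReal.ofReal_rpow_of_nonneg (by positivity) (by positivity),
          ← ENNReal.ofReal_mul hl.le]
    _ = ENNReal.ofReal ((p / r) ^ (1 / p) * (q / r) ^ (1 / q) * (a * b)) := by rw [hkey]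
    _ = ENNReal.ofReal ((p / r) ^ (1 / p) * (q / r) ^ (1 / q)) * (A * B) := by
        rw [ENNReal.ofReal_mul hC.le, ENNReal.ofReal_mul ha.le,
          ENNReal.ofReal_toReal hAt, ENNReal.ofReal_toReal hBt]

lemma weakNorm_holder {α : Type*} [MeasurableSpace α] (μ : Measure α) {p q r : ℝ}
    (hp : 0 < p) (hq : 0 < q) (hr : 0 < r) (hpqr : 1 / r = 1 / p + 1 / q)
    (f g : α → ℝ) :
    weakNorm μ r (fun x => f x * g x) ≤
      ENNReal.ofReal ((p / r) ^ (1 / p) * (q / r) ^ (1 / q)) *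
        (weakNorm μ p f * weakNorm μ q g) := by
  have hw : ∀ (ρ : ℝ) (h : α → ℝ), weakNorm μ ρ h =
      ⨆ (l : ℝ) (_ : 0 < l), ENNReal.ofReal l *
        μ {x | ENNReal.ofReal l < ENNReal.ofReal |h x|} ^ (1 / ρ) := by
    intro ρ h
    unfold weakNorm
    refine iSup_congr fun l => iSup_congr fun hl => ?_
    have hss : {x | l < |h x|} = {x | ENNReal.ofReal l < ENNReal.ofReal |h x|} := by
      ext x
      simp [ENNReal.ofReal_lt_ofReal_iff_of_nonneg hl.le]
    rw [hss]
  rw [hw r, hw p, hw q]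
  refine iSup₂_le fun l hl => ?_
  have hset : {x | ENNReal.ofReal l < ENNReal.ofReal |f x * g x|} =
      {x | ENNReal.ofReal l < ENNReal.ofReal |f x| * ENNReal.ofReal |g x|} := by
    ext x
    simp only [mem_setOf_eq]
    rw [abs_mul, ENNReal.ofReal_mul (abs_nonneg _)]
  rw [hset]
  exact aux_le μ hp hq hr hpqr _ _ hl

/-- Hölder's inequality for iterated weak norms: if `1/rᵢ = 1/pᵢ + 1/qᵢ`
(`i = 1, 2`) with all exponents in `(0,∞)`, then
`‖fg‖_{L^{r2,∞}(L^{r1,∞})} ≤ C·‖f‖_{L^{p2,∞}(L^{p1,∞})}·‖g‖_{L^{q2,∞}(L^{q1,∞})}` with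
`C = ∏ᵢ (pᵢ/rᵢ)^{1/pᵢ} (qᵢ/rᵢ)^{1/qᵢ}`. -/
theorem stmt13 (n m : ℕ) (p1 p2 q1 q2 r1 r2 : ℝ)
    (hp1 : 0 < p1) (hp2 : 0 < p2) (hq1 : 0 < q1) (hq2 : 0 < q2)
    (hr1 : 0 < r1) (hr2 : 0 < r2)
    (h1 : 1 / r1 = 1 / p1 + 1 / q1) (h2 : 1 / r2 = 1 / p2 + 1 / q2)
    (f g : Euc n × Euc m → ℝ) (hf : Measurable f) (hg : Measurable g) :
    iteratedWeakNorm r1 r2 (fun z => f z * g z) ≤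
      ENNReal.ofReal ((p1 / r1) ^ (1 / p1) * (q1 / r1) ^ (1 / q1) *
          ((p2 / r2) ^ (1 / p2) * (q2 / r2) ^ (1 / q2))) *
        (iteratedWeakNorm p1 p2 f * iteratedWeakNorm q1 q2 g) := by
  set C1 : ℝ := (p1 / r1) ^ (1 / p1) * (q1 / r1) ^ (1 / q1) with hC1def
  set C2 : ℝ := (p2 / r2) ^ (1 / p2) * (q2 / r2) ^ (1 / q2) with hC2def
  have hC1 : 0 < C1 := by
    have h3 := Real.rpow_pos_of_pos (show (0:ℝ) < p1 / r1 by positivity) (1 / p1)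
    have h4 := Real.rpow_pos_of_pos (show (0:ℝ) < q1 / r1 by positivity) (1 / q1)
    positivity
  set F : Euc m → ℝ≥0∞ := fun y => weakNorm volume p1 fun x => f (x, y) with hFdef
  set G : Euc m → ℝ≥0∞ := fun y => weakNorm volume q1 fun x => g (x, y) with hGdef
  have hinner : ∀ y : Euc m,
      (weakNorm volume r1 fun x => f (x, y) * g (x, y)) ≤ ENNReal.ofReal C1 * (F y * G y) :=
    fun y => weakNorm_holder volume hp1 hq1 hr1 h1 _ _
  rw [iteratedWeakNorm]
  refine iSup₂_le fun l hl => ?_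
  have hl' : 0 < l / C1 := by positivity
  have hlC : ENNReal.ofReal l = ENNReal.ofReal C1 * ENNReal.ofReal (l / C1) := by
    rw [← ENNReal.ofReal_mul hC1.le, mul_div_cancel₀ _ hC1.ne']
  have hsub : {y : Euc m | ENNReal.ofReal l <
        weakNorm volume r1 fun x => (fun z => f z * g z) (x, y)} ⊆
      {y : Euc m | ENNReal.ofReal (l / C1) < F y * G y} := by
    intro y hy
    simp only [mem_setOf_eq] at hy ⊢
    have h5 : ENNReal.ofReal l < ENNReal.ofReal C1 * (F y * G y) :=
      lt_of_lt_of_le hy (hinner y)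
    rw [hlC] at h5
    exact (ENNReal.mul_lt_mul_iff_right (ENNReal.ofReal_pos.2 hC1).ne' ENNReal.ofReal_ne_top).1 h5
  calc ENNReal.ofReal l *
        volume {y : Euc m | ENNReal.ofReal l <
          weakNorm volume r1 fun x => (fun z => f z * g z) (x, y)} ^ (1 / r2)
      ≤ ENNReal.ofReal l *
        volume {y : Euc m | ENNReal.ofReal (l / C1) < F y * G y} ^ (1 / r2) :=
        mul_le_mul_right (ENNReal.rpow_le_rpow (measure_mono hsub) (by positivity)) _
    _ = ENNReal.ofReal C1 * (ENNReal.ofReal (l / C1) *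
        volume {y : Euc m | ENNReal.ofReal (l / C1) < F y * G y} ^ (1 / r2)) := by
        rw [hlC, mul_assoc]
    _ ≤ ENNReal.ofReal C1 * (ENNReal.ofReal C2 *
        ((⨆ (t : ℝ) (_ : 0 < t), ENNReal.ofReal t *
            volume {y : Euc m | ENNReal.ofReal t < F y} ^ (1 / p2)) *
         (⨆ (t : ℝ) (_ : 0 < t), ENNReal.ofReal t *
            volume {y : Euc m | ENNReal.ofReal t < G y} ^ (1 / q2)))) :=
        mul_le_mul_right (aux_le volume hp2 hq2 hr2 h2 F G hl') _
    _ = ENNReal.ofReal (C1 * C2) * (iteratedWeakNorm p1 p2 f * iteratedWeakNorm q1 q2 g) := by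
        rw [ENNReal.ofReal_mul hC1.le, mul_assoc]
        rfl
end
end

section
/- Hölder's inequality for mixed weak norms under the proportionality condition: suppose 0 < p_i, q_i, r_i < ∞ with 1/r_i = 1/p_i + 1/q_i for i = 1, 2, and p1·q2 = p2·q1. Then for all measurable functions f, g on ℝ^n × ℝ^m, ‖ f·g ‖_{L^{(r1,r2),∞}} ≤ C · ‖f‖_{L^{(p1,p2),∞}} · ‖g‖_{L^{(q1,q2),∞}}, where C = max{1, 2^{1/r1 − 1/r2}} · p2^{1/p2} · q2^{1/q2} / r2^{1/r2} and f·g denotes the pointwise product. -/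
open MeasureTheory ENNReal Filter Topology Set

noncomputable section

set_option linter.unreachableTactic false
set_option linter.unusedTactic false

section AuxStmt14

variable {n m : ℕ}

lemma mixedNorm_indicator {a : ℝ} (b : ℝ) (ha : 0 < a) {S : Set (Euc n × Euc m)}
    (hS : MeasurableSet S) :
    mixedNorm a b (S.indicator fun _ => (1:ℝ)) =
      (∫⁻ y : Euc m, volume ((fun x => (x, y)) ⁻¹' S) ^ (b / a)) ^ (1 / b) := by
  unfold mixedNorm
  congr 1
  refine lintegral_congr fun y => ?_
  congr 1
  have h : ∀ x : Euc n, ENNReal.ofReal |S.indicator (fun _ => (1:ℝ)) (x, y)| ^ a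
      = ((fun x => (x, y)) ⁻¹' S).indicator (fun _ => (1:ℝ≥0∞)) x := by
    intro x
    by_cases hx : (x, y) ∈ S
    · have hx' : x ∈ (fun x => (x, y)) ⁻¹' S := hx
      simp [Set.indicator_of_mem hx, Set.indicator_of_mem hx']
    · have hx' : x ∉ (fun x => (x, y)) ⁻¹' S := hx
      simp [Set.indicator_of_notMem hx, Set.indicator_of_notMem hx',
        ENNReal.zero_rpow_of_pos ha]
  simp_rw [h]
  exact lintegral_indicator_one (hS.preimage measurable_prodMk_right)

lemma le_mixedWeakNorm (p1 p2 : ℝ) (f : Euc n × Euc m → ℝ) {l : ℝ} (hl : 0 < l) :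
    ENNReal.ofReal l * mixedNorm p1 p2 ({z | l < |f z|}.indicator fun _ => (1:ℝ)) ≤
      mixedWeakNorm p1 p2 f :=
  le_iSup₂_of_le l hl le_rfl

lemma J_le {p1 p2 : ℝ} (hp1 : 0 < p1) (hp2 : 0 < p2) (f : Euc n × Euc m → ℝ)
    (hf : Measurable f) {l : ℝ} (hl : 0 < l) :
    ∫⁻ y : Euc m, volume ((fun x => (x, y)) ⁻¹' {z | l < |f z|}) ^ (p2/p1)
      ≤ (mixedWeakNorm p1 p2 f / ENNReal.ofReal l) ^ p2 := by
  have hS : MeasurableSet {z : Euc n × Euc m | l < |f z|} :=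
    measurableSet_lt measurable_const hf.abs
  have h := le_mixedWeakNorm p1 p2 f hl
  rw [mixedNorm_indicator p2 hp1 hS] at h
  set J := ∫⁻ y : Euc m, volume ((fun x => (x, y)) ⁻¹' {z | l < |f z|}) ^ (p2/p1) with hJ
  have h2 : J ^ (1/p2) ≤ mixedWeakNorm p1 p2 f / ENNReal.ofReal l := by
    rw [ENNReal.le_div_iff_mul_le (Or.inl (by simp [hl])) (Or.inl ENNReal.ofReal_ne_top),
      mul_comm]
    exact h
  calc J = (J ^ (1/p2)) ^ p2 := by
        rw [← ENNReal.rpow_mul, one_div, inv_mul_cancel₀ hp2.ne', ENNReal.rpow_one]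
    _ ≤ _ := ENNReal.rpow_le_rpow h2 hp2.le

lemma real_opt {p2 q2 r2 F G l : ℝ} (hp2 : 0 < p2) (hq2 : 0 < q2) (hr2 : 0 < r2)
    (h2 : 1/r2 = 1/p2 + 1/q2) (hF : 0 < F) (hG : 0 < G) (hl : 0 < l) :
    ∃ lam : ℝ, 0 < lam ∧
      l * ((F/lam)^p2 + (G*lam/l)^q2)^(1/r2) ≤
        p2^(1/p2) * q2^(1/q2) / r2^(1/r2) * (F*G) := by
  have hsplit : r2/p2 + r2/q2 = 1 := by
    field_simp at h2 ⊢
    linarith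
  set T : ℝ := F*G/l with hT
  have hTpos : 0 < T := by positivity
  set β : ℝ := q2/p2 with hβ
  have hβpos : 0 < β := by positivity
  set u : ℝ := T^r2 * β^(r2/q2) with hu
  have hupos : 0 < u := by positivity
  refine ⟨F / u^(1/p2), by positivity, le_of_eq ?_⟩
  have hlamdiv : F / (F / u^(1/p2)) = u^(1/p2) := by
    rw [div_div_cancel₀ hF.ne']
  have hA : (F / (F / u^(1/p2)))^p2 = u := by
    rw [hlamdiv, ← Real.rpow_mul hupos.le, one_div, inv_mul_cancel₀ hp2.ne', Real.rpow_one]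
  have hGlam : G * (F / u^(1/p2)) / l = T^(r2/q2) * β^(-(r2/(q2*p2))) := by
    have e1 : G * (F / u^(1/p2)) / l = T / u^(1/p2) := by
      rw [hT]; ring
    have e2 : u^(1/p2) = T^(r2/p2) * β^(r2/(q2*p2)) := by
      rw [hu, Real.mul_rpow (by positivity) (by positivity), ← Real.rpow_mul hTpos.le,
        ← Real.rpow_mul hβpos.le]
      congr 1 <;> [skip; congr 1] <;> field_simp <;> ring
    have e3 : (1:ℝ) - r2/p2 = r2/q2 := by linarith
    rw [e1, e2]
    rw [div_eq_iff (by positivity)]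
    rw [← e3, Real.rpow_sub hTpos, Real.rpow_one, Real.rpow_neg hβpos.le]
    field_simp
  have hB : (G * (F / u^(1/p2)) / l)^q2 = T^r2 * β^(-(r2/p2)) := by
    rw [hGlam, Real.mul_rpow (by positivity) (by positivity), ← Real.rpow_mul hTpos.le,
      ← Real.rpow_mul hβpos.le, div_mul_cancel₀ _ hq2.ne']
    congr 2
    field_simp
  have hfac : 1 + p2/q2 = p2/r2 := by
    field_simp at h2 ⊢
    linarith
  have hsum : (F / (F / u^(1/p2)))^p2 + (G * (F / u^(1/p2)) / l)^q2
      = T^r2 * β^(r2/q2) * (p2/r2) := by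
    rw [hA, hB, hu]
    have e4 : β^(-(r2/p2)) = β^(r2/q2) * β⁻¹ := by
      have : -(r2/p2) = r2/q2 + (-1) := by linarith
      rw [this, Real.rpow_add hβpos, Real.rpow_neg_one]
    have e5 : β⁻¹ = p2/q2 := by
      rw [hβ]
      field_simp
    rw [e4, e5, ← hfac]
    ring
  rw [hsum]
  have e6 : (T^r2 * β^(r2/q2) * (p2/r2))^(1/r2) = T * β^(1/q2) * (p2/r2)^(1/r2) := by
    rw [Real.mul_rpow (by positivity) (by positivity), Real.mul_rpow (by positivity) (by positivity),
      ← Real.rpow_mul hTpos.le, ← Real.rpow_mul hβpos.le, mul_one_div, div_self hr2.ne',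
      Real.rpow_one]
    have exp1 : r2/q2*(1/r2) = 1/q2 := by field_simp
    rw [exp1]
  rw [e6]
  have e7 : β^(1/q2) * (p2/r2)^(1/r2) = p2^(1/p2) * q2^(1/q2) / r2^(1/r2) := by
    rw [hβ, Real.div_rpow hq2.le hp2.le, Real.div_rpow hp2.le hr2.le]
    have e8 : p2^(1/r2) = p2^(1/p2) * p2^(1/q2) := by
      rw [← Real.rpow_add hp2, h2]
    rw [e8]
    field_simp
  have e9 : l * T = F * G := by
    rw [hT]
    field_simp
  calc l * (T * β^(1/q2) * (p2/r2)^(1/r2)) = (l*T) * (β^(1/q2) * (p2/r2)^(1/r2)) := by ring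
    _ = p2^(1/p2) * q2^(1/q2) / r2^(1/r2) * (F*G) := by rw [e7, e9]; ring

lemma ennreal_add_rpow {c : ℝ} (hc : 0 < c) (a b : ℝ≥0∞) :
    (a+b)^c ≤ ENNReal.ofReal (max 1 (2^(c-1))) * (a^c + b^c) := by
  rcases le_total c 1 with h | h
  · calc (a+b)^c ≤ a^c + b^c := ENNReal.rpow_add_le_add_rpow a b hc.le h
      _ ≤ _ := le_mul_of_one_le_left zero_le
          (ENNReal.one_le_ofReal.mpr (le_max_left _ _))
  · calc (a+b)^c ≤ (2:ℝ≥0∞)^(c-1) * (a^c + b^c) :=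
        ENNReal.rpow_add_le_mul_rpow_add_rpow a b h
      _ ≤ _ := by
        refine mul_le_mul_left ?_ _
        rw [show ((2:ℝ≥0∞)) = ENNReal.ofReal 2 by simp,
          ENNReal.ofReal_rpow_of_pos (by norm_num : (0:ℝ) < 2)]
        exact ENNReal.ofReal_le_ofReal (le_max_right _ _)

lemma sec_ae_zero {p1 p2 : ℝ} (hp1 : 0 < p1) (hp2 : 0 < p2)
    (f : Euc n × Euc m → ℝ) (hf : Measurable f)
    (hF : mixedWeakNorm p1 p2 f = 0) :
    ∀ᵐ y : Euc m, volume {x : Euc n | f (x, y) ≠ 0} = 0 := by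
  have key : ∀ l : ℝ, 0 < l →
      ∀ᵐ y : Euc m, volume ((fun x => (x, y)) ⁻¹' {z | l < |f z|}) = 0 := by
    intro l hl
    have h := J_le hp1 hp2 f hf hl
    rw [hF, ENNReal.zero_div, ENNReal.zero_rpow_of_pos hp2, le_zero_iff] at h
    have hS : MeasurableSet {z : Euc n × Euc m | l < |f z|} :=
      measurableSet_lt measurable_const hf.abs
    have hmeas : Measurable fun y : Euc m =>
        volume ((fun x => (x, y)) ⁻¹' {z | l < |f z|}) ^ (p2/p1) :=
      (measurable_measure_prodMk_right hS).pow measurable_const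
    have h0 := (lintegral_eq_zero_iff hmeas).mp h
    filter_upwards [h0] with y hy
    simp only [Pi.zero_apply] at hy
    rcases (ENNReal.rpow_eq_zero_iff).mp hy with ⟨h', _⟩ | ⟨_, h'⟩
    · exact h'
    · exact absurd h' (not_lt.mpr (by positivity))
  have h2 : ∀ᵐ y : Euc m, ∀ k : ℕ,
      volume ((fun x => (x, y)) ⁻¹' {z | 1/((k:ℝ)+1) < |f z|}) = 0 :=
    ae_all_iff.mpr fun k => key _ (by positivity)
  filter_upwards [h2] with y hy
  refine measure_mono_null (fun x hx => ?_) (measure_iUnion_null hy)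
  obtain ⟨k, hk⟩ := exists_nat_one_div_lt (abs_pos.mpr hx)
  exact Set.mem_iUnion.mpr ⟨k, hk⟩

end AuxStmt14

/-- Hölder's inequality for mixed weak norms under the proportionality
condition `p1·q2 = p2·q1`: if `1/rᵢ = 1/pᵢ + 1/qᵢ` (`i = 1, 2`) with all exponents in
`(0,∞)`, then `‖fg‖_{L^{(r1,r2),∞}} ≤ C·‖f‖_{L^{(p1,p2),∞}}·‖g‖_{L^{(q1,q2),∞}}` with
`C = max{1, 2^{1/r1 − 1/r2}}·p2^{1/p2}·q2^{1/q2}/r2^{1/r2}`. -/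
theorem stmt14 (n m : ℕ) (p1 p2 q1 q2 r1 r2 : ℝ)
    (hp1 : 0 < p1) (hp2 : 0 < p2) (hq1 : 0 < q1) (hq2 : 0 < q2)
    (hr1 : 0 < r1) (hr2 : 0 < r2)
    (h1 : 1 / r1 = 1 / p1 + 1 / q1) (h2 : 1 / r2 = 1 / p2 + 1 / q2)
    (hprop : p1 * q2 = p2 * q1)
    (f g : Euc n × Euc m → ℝ) (hf : Measurable f) (hg : Measurable g) :
    mixedWeakNorm r1 r2 (fun z => f z * g z) ≤
      ENNReal.ofReal (max 1 (2 ^ (1 / r1 - 1 / r2)) *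
          (p2 ^ (1 / p2) * q2 ^ (1 / q2) / r2 ^ (1 / r2))) *
        (mixedWeakNorm p1 p2 f * mixedWeakNorm q1 q2 g) := by

  -- exponent relations
  have e1 : p1*q1 = r1*q1 + r1*p1 := by
    field_simp at h1
    linarith
  have e2 : p2*q2 = r2*q2 + r2*p2 := by
    field_simp at h2
    linarith
  have hc1 : p2 / p1 = r2 / r1 := by
    rw [div_eq_div_iff hp1.ne' hr1.ne']
    have key : (p2*r1 - r2*p1) * ((q1+p1)*(q2+p2)) = 0 := by
      linear_combination (-(p2*(q2+p2)))*e1 + (p1*(q1+p1))*e2 + (-(p1*p2))*hprop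
    rcases mul_eq_zero.mp key with h | h
    · linarith
    · nlinarith
  have hc2 : q2 / q1 = r2 / r1 := by
    have hc0 : q2/q1 = p2/p1 := by
      rw [div_eq_div_iff hq1.ne' hp1.ne']
      linarith [hprop]
    exact hc0.trans hc1
  have hcpos : 0 < r2/r1 := by positivity
  set F := mixedWeakNorm p1 p2 f with hFdef
  set G := mixedWeakNorm q1 q2 g with hGdef
  have hCpos : (0:ℝ) < max 1 (2 ^ (1/r1 - 1/r2)) * (p2^(1/p2) * q2^(1/q2) / r2^(1/r2)) := by
    have h1' : (0:ℝ) < max 1 (2 ^ (1/r1 - 1/r2)) := lt_of_lt_of_le one_pos (le_max_left _ _)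
    have h2' : (0:ℝ) < p2^(1/p2) * q2^(1/q2) / r2^(1/r2) := by positivity
    positivity
  have hCne : ENNReal.ofReal (max 1 (2 ^ (1/r1 - 1/r2)) *
      (p2^(1/p2) * q2^(1/q2) / r2^(1/r2))) ≠ 0 := (ENNReal.ofReal_pos.mpr hCpos).ne'
  simp only [mixedWeakNorm]
  refine iSup₂_le fun l hl => ?_
  have hSl : MeasurableSet {z : Euc n × Euc m | l < |f z * g z|} :=
    measurableSet_lt measurable_const (hf.mul hg).abs
  rw [mixedNorm_indicator r2 hr1 hSl]
  set JE := ∫⁻ y : Euc m, volume ((fun x => (x, y)) ⁻¹' {z | l < |f z * g z|}) ^ (r2/r1)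
    with hJE
  by_cases hF0 : F = 0
  · have hz := sec_ae_zero hp1 hp2 f hf hF0
    have hJE0 : JE = 0 := by
      rw [hJE, ← lintegral_zero]
      refine lintegral_congr_ae ?_
      filter_upwards [hz] with y hy
      have hnull : volume ((fun x => (x, y)) ⁻¹' {z | l < |f z * g z|}) = 0 := by
        refine measure_mono_null (fun x hx => ?_) hy
        simp only [mem_preimage, mem_setOf_eq] at hx ⊢
        intro h0
        rw [h0, zero_mul, abs_zero] at hx
        linarith
      rw [hnull, ENNReal.zero_rpow_of_pos hcpos]
    rw [hJE0, ENNReal.zero_rpow_of_pos (by positivity : (0:ℝ) < 1/r2), mul_zero]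
    exact zero_le
  by_cases hG0 : G = 0
  · have hz := sec_ae_zero hq1 hq2 g hg hG0
    have hJE0 : JE = 0 := by
      rw [hJE, ← lintegral_zero]
      refine lintegral_congr_ae ?_
      filter_upwards [hz] with y hy
      have hnull : volume ((fun x => (x, y)) ⁻¹' {z | l < |f z * g z|}) = 0 := by
        refine measure_mono_null (fun x hx => ?_) hy
        simp only [mem_preimage, mem_setOf_eq] at hx ⊢
        intro h0
        rw [h0, mul_zero, abs_zero] at hx
        linarith
      rw [hnull, ENNReal.zero_rpow_of_pos hcpos]
    rw [hJE0, ENNReal.zero_rpow_of_pos (by positivity : (0:ℝ) < 1/r2), mul_zero]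
    exact zero_le
  by_cases hFt : F = ⊤
  · rw [hFt, ENNReal.top_mul hG0, ENNReal.mul_top hCne]
    exact le_top
  by_cases hGt : G = ⊤
  · rw [hGt, ENNReal.mul_top hF0, ENNReal.mul_top hCne]
    exact le_top
  -- main case
  set Fr := F.toReal with hFr
  set Gr := G.toReal with hGr
  have hFrpos : 0 < Fr := ENNReal.toReal_pos hF0 hFt
  have hGrpos : 0 < Gr := ENNReal.toReal_pos hG0 hGt
  have hF' : F = ENNReal.ofReal Fr := (ENNReal.ofReal_toReal hFt).symm
  have hG' : G = ENNReal.ofReal Gr := (ENNReal.ofReal_toReal hGt).symm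
  obtain ⟨lam, hlam, hopt⟩ := real_opt hp2 hq2 hr2 h2 hFrpos hGrpos hl
  have hllam : 0 < l / lam := by positivity
  have hJF := J_le hp1 hp2 f hf hlam
  rw [hc1] at hJF
  have hJG := J_le hq1 hq2 g hg hllam
  rw [hc2] at hJG
  have hSf : MeasurableSet {z : Euc n × Euc m | lam < |f z|} :=
    measurableSet_lt measurable_const hf.abs
  have hsec : ∀ y : Euc m, volume ((fun x => (x, y)) ⁻¹' {z | l < |f z * g z|})
      ≤ volume ((fun x => (x, y)) ⁻¹' {z | lam < |f z|})
        + volume ((fun x => (x, y)) ⁻¹' {z | l/lam < |g z|}) := by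
    intro y
    refine le_trans (measure_mono (fun x hx => ?_)) (measure_union_le _ _)
    simp only [mem_preimage, mem_setOf_eq, mem_union] at hx ⊢
    by_contra hcon
    push_neg at hcon
    obtain ⟨ha, hb⟩ := hcon
    have hle : |f (x, y) * g (x, y)| ≤ lam * (l/lam) := by
      rw [abs_mul]
      exact mul_le_mul ha hb (abs_nonneg _) hlam.le
    have heq : lam * (l/lam) = l := by field_simp
    rw [heq] at hle
    linarith
  set M := ENNReal.ofReal (max 1 (2^(r2/r1 - 1))) with hM
  have hchain : JE ≤ M * ((F / ENNReal.ofReal lam)^p2 + (G / ENNReal.ofReal (l/lam))^q2) := by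
    calc JE ≤ ∫⁻ y : Euc m, (volume ((fun x => (x, y)) ⁻¹' {z | lam < |f z|})
          + volume ((fun x => (x, y)) ⁻¹' {z | l/lam < |g z|})) ^ (r2/r1) :=
        lintegral_mono fun y => ENNReal.rpow_le_rpow (hsec y) hcpos.le
      _ ≤ ∫⁻ y : Euc m, M * ((volume ((fun x => (x, y)) ⁻¹' {z | lam < |f z|})) ^ (r2/r1)
          + (volume ((fun x => (x, y)) ⁻¹' {z | l/lam < |g z|})) ^ (r2/r1)) :=
        lintegral_mono fun y => ennreal_add_rpow hcpos _ _
      _ = M * ((∫⁻ y : Euc m, (volume ((fun x => (x, y)) ⁻¹' {z | lam < |f z|})) ^ (r2/r1))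
          + ∫⁻ y : Euc m, (volume ((fun x => (x, y)) ⁻¹' {z | l/lam < |g z|})) ^ (r2/r1)) := by
        rw [lintegral_const_mul' _ _ ENNReal.ofReal_ne_top,
          lintegral_add_left ((measurable_measure_prodMk_right hSf).pow measurable_const)]
      _ ≤ M * ((F / ENNReal.ofReal lam)^p2 + (G / ENNReal.ofReal (l/lam))^q2) :=
        mul_le_mul_right (add_le_add hJF hJG) _
  have hMpow : M ^ (1/r2) = ENNReal.ofReal (max 1 (2^(1/r1 - 1/r2))) := by
    rw [hM, ENNReal.ofReal_rpow_of_pos (lt_of_lt_of_le one_pos (le_max_left _ _))]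
    congr 1
    have hexp : (r2/r1 - 1) * (1/r2) = 1/r1 - 1/r2 := by
      field_simp
    rcases le_total (1:ℝ) (r2/r1) with hcc | hcc
    · have hb1 : (0:ℝ) ≤ r2/r1 - 1 := by linarith
      have hb2 : (0:ℝ) ≤ 1/r1 - 1/r2 := by
        rw [← hexp]
        exact mul_nonneg hb1 (by positivity)
      have ha1 : (1:ℝ) ≤ 2^(r2/r1 - 1) := by
        have h := Real.rpow_le_rpow_of_exponent_le one_le_two hb1
        rwa [Real.rpow_zero] at h
      have ha2 : (1:ℝ) ≤ 2^(1/r1 - 1/r2) := by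
        have h := Real.rpow_le_rpow_of_exponent_le one_le_two hb2
        rwa [Real.rpow_zero] at h
      rw [max_eq_right ha1, max_eq_right ha2, ← Real.rpow_mul (by norm_num : (0:ℝ) ≤ 2), hexp]
    · have hb1 : r2/r1 - 1 ≤ 0 := by linarith
      have hb2 : 1/r1 - 1/r2 ≤ (0:ℝ) := by
        rw [← hexp]
        have h0' : 0 ≤ 1/r2 := by positivity
        nlinarith
      have ha1 : 2^(r2/r1 - 1) ≤ (1:ℝ) := by
        have h := Real.rpow_le_rpow_of_exponent_le one_le_two hb1
        rwa [Real.rpow_zero] at h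
      have ha2 : 2^(1/r1 - 1/r2) ≤ (1:ℝ) := by
        have h := Real.rpow_le_rpow_of_exponent_le one_le_two hb2
        rwa [Real.rpow_zero] at h
      rw [max_eq_left ha1, max_eq_left ha2, Real.one_rpow]
  calc ENNReal.ofReal l * JE ^ (1/r2)
      ≤ ENNReal.ofReal l * (M * ((F / ENNReal.ofReal lam)^p2
          + (G / ENNReal.ofReal (l/lam))^q2)) ^ (1/r2) :=
        mul_le_mul_right (ENNReal.rpow_le_rpow hchain (by positivity)) _
    _ = M^(1/r2) * (ENNReal.ofReal l * ((F / ENNReal.ofReal lam)^p2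
          + (G / ENNReal.ofReal (l/lam))^q2) ^ (1/r2)) := by
        rw [ENNReal.mul_rpow_of_nonneg _ _ (by positivity : (0:ℝ) ≤ 1/r2)]
        ring
    _ = M^(1/r2) * ENNReal.ofReal (l * ((Fr/lam)^p2 + (Gr*lam/l)^q2)^(1/r2)) := by
        congr 1
        rw [hF', hG', ← ENNReal.ofReal_div_of_pos hlam, ← ENNReal.ofReal_div_of_pos hllam,
          ENNReal.ofReal_rpow_of_pos (by positivity), ENNReal.ofReal_rpow_of_pos (by positivity),
          ← ENNReal.ofReal_add (by positivity) (by positivity),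
          ENNReal.ofReal_rpow_of_pos (by positivity), ← ENNReal.ofReal_mul hl.le,
          show Gr/(l/lam) = Gr*lam/l from div_div_eq_mul_div Gr l lam]
    _ ≤ M^(1/r2) * ENNReal.ofReal (p2^(1/p2) * q2^(1/q2) / r2^(1/r2) * (Fr*Gr)) :=
        mul_le_mul_right (ENNReal.ofReal_le_ofReal hopt) _
    _ = ENNReal.ofReal (max 1 (2^(1/r1 - 1/r2)) * (p2^(1/p2) * q2^(1/q2) / r2^(1/r2))) * (F * G) := by
        rw [hMpow, hF', hG', ← ENNReal.ofReal_mul (le_of_lt (lt_of_lt_of_le one_pos (le_max_left _ _))),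
          ← ENNReal.ofReal_mul hFrpos.le,
          ← ENNReal.ofReal_mul (by positivity : (0:ℝ) ≤ max 1 (2^(1/r1 - 1/r2)) * (p2^(1/p2) * q2^(1/q2) / r2^(1/r2)))]
        congr 1
        ring
end
end

section
/- Geometric inequality in the mixed weak norm: let 0 < q1, q2 < ∞ and let F be a non-negative measurable function on ℝ^n × ℝ^n. Then there exists a constant C depending only on q1, q2, n such that ‖F‖_{L^{(q1,q2),∞}} ≤ C · esssup_{(x,y) ∈ ℝ^n×ℝ^n} F(x,y)·(|x+y| + |x−y|)^{n/q1 + n/q2}, where |·| is the Euclidean norm on ℝ^n. -/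
open MeasureTheory ENNReal Filter Topology Set

noncomputable section

lemma mixedNorm_indicator_le {n : ℕ} (p1 p2 : ℝ) (hp1 : 0 < p1) (hp2 : 0 < p2)
    (S : Set (Euc n × Euc n)) (B : Set (Euc n)) (hB : MeasurableSet B)
    (N : Set (Euc n × Euc n)) (hN : MeasurableSet N) (hN0 : volume N = 0)
    (hsub : S ⊆ (B ×ˢ B) ∪ N) :
    mixedNorm p1 p2 (S.indicator fun _ => (1:ℝ)) ≤ volume B ^ (1/p1 + 1/p2) := by
  have hBB : MeasurableSet (B ×ˢ B) := hB.prod hB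
  have hν : ∀ᵐ y : Euc n, ∫⁻ x, N.indicator (fun _ => (1:ℝ≥0∞)) (x, y) = 0 := by
    have hmeas : Measurable (N.indicator (fun _ => (1:ℝ≥0∞))) :=
      measurable_const.indicator hN
    have hdouble : ∫⁻ y : Euc n, ∫⁻ x : Euc n, N.indicator (fun _ => (1:ℝ≥0∞)) (x, y) = 0 := by
      rw [← lintegral_prod_symm _ hmeas.aemeasurable]
      rw [← Measure.volume_eq_prod]
      rw [lintegral_indicator_const hN, hN0, mul_zero]
    have hm2 : Measurable fun y : Euc n => ∫⁻ x, N.indicator (fun _ => (1:ℝ≥0∞)) (x, y) := by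
      exact Measurable.lintegral_prod_left (f := fun x y => N.indicator (fun _ => (1:ℝ≥0∞)) (x, y))
        (by exact hmeas.comp measurable_id)
    exact (lintegral_eq_zero_iff hm2).mp hdouble
  have hpt : ∀ z : Euc n × Euc n, ENNReal.ofReal |S.indicator (fun _ => (1:ℝ)) z| ^ p1 ≤
      (B ×ˢ B).indicator (fun _ => (1:ℝ≥0∞)) z + N.indicator (fun _ => (1:ℝ≥0∞)) z := by
    intro z
    by_cases hz : z ∈ S
    · rcases hsub hz with h | h
      · rw [Set.indicator_of_mem hz, Set.indicator_of_mem h]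
        simp [ENNReal.one_rpow]
      · rw [Set.indicator_of_mem hz, Set.indicator_of_mem h]
        simp [ENNReal.one_rpow]
    · rw [Set.indicator_of_notMem hz]
      simp [ENNReal.zero_rpow_of_pos hp1]
  have hinner : ∀ᵐ y : Euc n, (∫⁻ x : Euc n, ENNReal.ofReal |S.indicator (fun _ => (1:ℝ)) (x, y)| ^ p1)
      ≤ B.indicator (fun _ => volume B) y := by
    filter_upwards [hν] with y hy
    calc (∫⁻ x : Euc n, ENNReal.ofReal |S.indicator (fun _ => (1:ℝ)) (x, y)| ^ p1)
        ≤ ∫⁻ x : Euc n, ((B ×ˢ B).indicator (fun _ => (1:ℝ≥0∞)) (x, y)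
            + N.indicator (fun _ => (1:ℝ≥0∞)) (x, y)) := lintegral_mono fun x => hpt (x, y)
      _ = (∫⁻ x : Euc n, (B ×ˢ B).indicator (fun _ => (1:ℝ≥0∞)) (x, y))
            + ∫⁻ x : Euc n, N.indicator (fun _ => (1:ℝ≥0∞)) (x, y) := by
          exact lintegral_add_left
            ((measurable_const.indicator hBB).comp (measurable_prodMk_right)) _
      _ = (∫⁻ x : Euc n, (B ×ˢ B).indicator (fun _ => (1:ℝ≥0∞)) (x, y)) := by rw [hy, add_zero]
      _ ≤ B.indicator (fun _ => volume B) y := by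
          by_cases hyB : y ∈ B
          · rw [Set.indicator_of_mem hyB]
            have : ∀ x : Euc n, (B ×ˢ B).indicator (fun _ => (1:ℝ≥0∞)) (x, y)
                ≤ B.indicator (fun _ => (1:ℝ≥0∞)) x := by
              intro x
              by_cases hx : (x, y) ∈ B ×ˢ B
              · rw [Set.indicator_of_mem hx, Set.indicator_of_mem hx.1]
              · simp [Set.indicator_of_notMem hx]
            calc _ ≤ ∫⁻ x : Euc n, B.indicator (fun _ => (1:ℝ≥0∞)) x := lintegral_mono this
              _ = volume B := by rw [lintegral_indicator_const hB, one_mul]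
          · rw [Set.indicator_of_notMem hyB]
            have : ∀ x : Euc n, (B ×ˢ B).indicator (fun _ => (1:ℝ≥0∞)) (x, y) = 0 := by
              intro x
              apply Set.indicator_of_notMem
              intro hx
              exact hyB hx.2
            simp [this]
  have houter : (∫⁻ y : Euc n, (∫⁻ x : Euc n,
        ENNReal.ofReal |S.indicator (fun _ => (1:ℝ)) (x, y)| ^ p1) ^ (p2 / p1))
      ≤ volume B ^ (p2 / p1) * volume B := by
    have h1 : (∫⁻ y : Euc n, (∫⁻ x : Euc n,
          ENNReal.ofReal |S.indicator (fun _ => (1:ℝ)) (x, y)| ^ p1) ^ (p2 / p1))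
        ≤ ∫⁻ y : Euc n, (B.indicator (fun _ => volume B) y) ^ (p2 / p1) := by
      refine lintegral_mono_ae ?_
      filter_upwards [hinner] with y hy
      exact ENNReal.rpow_le_rpow hy (le_of_lt (div_pos hp2 hp1))
    have h2 : ∀ y : Euc n, (B.indicator (fun _ => volume B) y) ^ (p2 / p1)
        = B.indicator (fun _ => volume B ^ (p2 / p1)) y := by
      intro y
      by_cases hyB : y ∈ B
      · rw [Set.indicator_of_mem hyB, Set.indicator_of_mem hyB]
      · rw [Set.indicator_of_notMem hyB, Set.indicator_of_notMem hyB,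
          ENNReal.zero_rpow_of_pos (div_pos hp2 hp1)]
    calc _ ≤ ∫⁻ y : Euc n, (B.indicator (fun _ => volume B) y) ^ (p2 / p1) := h1
      _ = ∫⁻ y : Euc n, B.indicator (fun _ => volume B ^ (p2 / p1)) y := by simp_rw [h2]
      _ = volume B ^ (p2 / p1) * volume B := lintegral_indicator_const hB _
  rw [mixedNorm]
  calc (∫⁻ y : Euc n, (∫⁻ x : Euc n,
        ENNReal.ofReal |S.indicator (fun _ => (1:ℝ)) (x, y)| ^ p1) ^ (p2 / p1)) ^ (1 / p2)
      ≤ (volume B ^ (p2 / p1) * volume B) ^ (1 / p2) :=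
        ENNReal.rpow_le_rpow houter (by positivity)
    _ = volume B ^ (1/p1 + 1/p2) := by
        have e1 : volume B ^ (p2 / p1) * volume B = volume B ^ (p2 / p1 + 1) := by
          rw [ENNReal.rpow_add_of_nonneg _ _ (le_of_lt (div_pos hp2 hp1)) zero_le_one,
            ENNReal.rpow_one]
        rw [e1, ← ENNReal.rpow_mul]
        congr 1
        field_simp

/-- Geometric inequality in the mixed weak norm: for `0 < q1, q2 < ∞` there is
a constant `C = C(q1, q2, n) > 0` such that for every non-negative measurable `F` on
`ℝ^n × ℝ^n`,
`‖F‖_{L^{(q1,q2),∞}} ≤ C · esssup F(x,y)·(|x+y| + |x−y|)^{n/q1 + n/q2}`. -/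
theorem stmt16 (n : ℕ) (hn : 0 < n) (q1 q2 : ℝ) (hq1 : 0 < q1) (hq2 : 0 < q2) :
    ∃ C : ℝ, 0 < C ∧ ∀ F : Euc n × Euc n → ℝ, Measurable F → (∀ z, 0 ≤ F z) →
      mixedWeakNorm q1 q2 F ≤
        ENNReal.ofReal C *
          essSup (fun z : Euc n × Euc n =>
              ENNReal.ofReal (F z *
                (‖z.1 + z.2‖ + ‖z.1 - z.2‖) ^ ((n : ℝ) / q1 + (n : ℝ) / q2)))
            (volume : Measure (Euc n × Euc n)) := by
  set γ : ℝ := (n:ℝ)/q1 + (n:ℝ)/q2 with hγdef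
  have hnR : (0:ℝ) < n := Nat.cast_pos.mpr hn
  have hγ : 0 < γ := by positivity
  set κ : ℝ≥0∞ := volume (Metric.ball (0 : Euc n) 1) with hκdef
  have hκ0 : 0 < κ := Metric.measure_ball_pos _ _ one_pos
  have hκtop : κ ≠ ⊤ := measure_ball_lt_top.ne
  set e : ℝ := 1/q1 + 1/q2 with hedef
  have he : 0 < e := by positivity
  have hKtop : κ ^ e ≠ ⊤ := ENNReal.rpow_ne_top_of_nonneg he.le hκtop
  have hK0 : κ ^ e ≠ 0 := (ENNReal.rpow_pos hκ0 hκtop).ne'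
  refine ⟨(κ ^ e).toReal, ENNReal.toReal_pos hK0 hKtop, ?_⟩
  intro F hF hF0
  rw [ENNReal.ofReal_toReal hKtop]
  set A := essSup (fun z : Euc n × Euc n =>
      ENNReal.ofReal (F z * (‖z.1 + z.2‖ + ‖z.1 - z.2‖) ^ γ)) volume with hAdef
  by_cases hAtop : A = ⊤
  · rw [hAtop, ENNReal.mul_top hK0]; exact le_top
  set a : ℝ := A.toReal with hadef
  have ha : 0 ≤ a := ENNReal.toReal_nonneg
  have hAa : ENNReal.ofReal a = A := ENNReal.ofReal_toReal hAtop
  have hae : ∀ᵐ z : Euc n × Euc n, F z * (‖z.1 + z.2‖ + ‖z.1 - z.2‖) ^ γ ≤ a := by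
    filter_upwards [ENNReal.ae_le_essSup (fun z : Euc n × Euc n =>
      ENNReal.ofReal (F z * (‖z.1 + z.2‖ + ‖z.1 - z.2‖) ^ γ)) (μ := volume)] with z hz
    rw [← hAdef, ← hAa] at hz
    exact (ENNReal.ofReal_le_ofReal_iff ha).mp hz
  set N : Set (Euc n × Euc n) :=
    {z | ¬ F z * (‖z.1 + z.2‖ + ‖z.1 - z.2‖) ^ γ ≤ a} with hNdef
  have hN0 : volume N = 0 := ae_iff.mp hae
  have hN' : MeasurableSet (toMeasurable volume N) := measurableSet_toMeasurable _ _
  have hN'0 : volume (toMeasurable volume N) = 0 := by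
    rw [measure_toMeasurable]; exact hN0
  rw [mixedWeakNorm]
  refine iSup₂_le fun l hl => ?_
  set r : ℝ := (a / l) ^ (1/γ) with hrdef
  have hal : 0 ≤ a / l := div_nonneg ha hl.le
  have hr : 0 ≤ r := Real.rpow_nonneg hal _
  set B := Metric.closedBall (0 : Euc n) r with hBdef
  have hsub : {z : Euc n × Euc n | l < |F z|} ⊆ (B ×ˢ B) ∪ toMeasurable volume N := by
    intro z hz
    by_cases hzN : z ∈ N
    · exact Or.inr (subset_toMeasurable _ _ hzN)
    · left
      have hzle : F z * (‖z.1 + z.2‖ + ‖z.1 - z.2‖) ^ γ ≤ a := not_not.mp hzN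
      have hlF : l < F z := by
        have := hz
        rwa [Set.mem_setOf_eq, abs_of_nonneg (hF0 z)] at this
      set s := ‖z.1 + z.2‖ + ‖z.1 - z.2‖ with hsdef
      have hs0 : 0 ≤ s := by positivity
      have hsγnn : 0 ≤ s ^ γ := Real.rpow_nonneg hs0 γ
      have hsγ : s ^ γ ≤ a / l := by
        rw [le_div_iff₀ hl]
        calc s ^ γ * l ≤ s ^ γ * F z :=
              mul_le_mul_of_nonneg_left hlF.le hsγnn
          _ = F z * s ^ γ := mul_comm _ _
          _ ≤ a := hzle
      have hsr : s ≤ r := by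
        have h := Real.rpow_le_rpow hsγnn hsγ (le_of_lt (by positivity : (0:ℝ) < 1/γ))
        rwa [← Real.rpow_mul hs0, mul_one_div, div_self hγ.ne', Real.rpow_one] at h
      have hbound : ∀ v : Euc n, 2 * ‖v‖ ≤ s → v ∈ B := by
        intro v hv
        rw [hBdef, mem_closedBall_zero_iff]
        have := norm_nonneg v
        linarith
      constructor
      · apply hbound
        have h1 : z.1 + z.1 = (z.1 + z.2) + (z.1 - z.2) := by abel
        have h2 : ‖z.1 + z.1‖ ≤ s := by rw [h1]; exact norm_add_le _ _
        have h3 : ‖z.1 + z.1‖ = 2 * ‖z.1‖ := by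
          rw [← two_smul ℝ z.1, norm_smul]; simp
        linarith
      · apply hbound
        have h1 : z.2 + z.2 = (z.1 + z.2) - (z.1 - z.2) := by abel
        have h2 : ‖z.2 + z.2‖ ≤ s := by rw [h1]; exact norm_sub_le _ _
        have h3 : ‖z.2 + z.2‖ = 2 * ‖z.2‖ := by
          rw [← two_smul ℝ z.2, norm_smul]; simp
        linarith
  have key := mixedNorm_indicator_le q1 q2 hq1 hq2 _ B
    (Metric.isClosed_closedBall.measurableSet) (toMeasurable volume N) hN' hN'0 hsub
  have hvol : volume B = ENNReal.ofReal (r ^ n) * κ := by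
    rw [hBdef, Measure.addHaar_closedBall volume 0 hr, finrank_euclideanSpace_fin]
  have hrne : (r ^ n) ^ e = a / l := by
    rw [← Real.rpow_natCast r n, ← Real.rpow_mul hr]
    have hne : (n : ℝ) * e = γ := by rw [hedef, hγdef]; field_simp
    rw [hne, hrdef, ← Real.rpow_mul hal, one_div, inv_mul_cancel₀ hγ.ne', Real.rpow_one]
  calc ENNReal.ofReal l *
        mixedNorm q1 q2 ({z : Euc n × Euc n | l < |F z|}.indicator fun _ => (1:ℝ))
      ≤ ENNReal.ofReal l * volume B ^ e := mul_le_mul_right key _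
    _ = ENNReal.ofReal l * (ENNReal.ofReal (a / l) * κ ^ e) := by
        rw [hvol, ENNReal.mul_rpow_of_nonneg _ _ he.le,
          ENNReal.ofReal_rpow_of_nonneg (by positivity) he.le, hrne]
    _ = ENNReal.ofReal (l * (a / l)) * κ ^ e := by
        rw [← mul_assoc, ← ENNReal.ofReal_mul hl.le]
    _ = κ ^ e * A := by
        rw [mul_comm l (a / l), div_mul_cancel₀ a hl.ne', hAa, mul_comm]
end
end

section
/- Geometric inequality in the iterated weak norm: let 0 < q1, q2 < ∞ and let F be a non-negative measurable function on ℝ^n × ℝ^n. Then there exists a constant C depending only on q1, q2, n such that ‖F‖_{L^{q2,∞}(L^{q1,∞})} ≤ C · esssup_{(x,y) ∈ ℝ^n×ℝ^n} F(x,y)·(|x+y| + |x−y|)^{n/q1 + n/q2}, where |·| is the Euclidean norm on ℝ^n. -/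
open MeasureTheory ENNReal Filter Topology Set

noncomputable section

lemma realA (nn q1 q2 s a l ny : ℝ) (hnn : 0 < nn) (hq1 : 0 < q1) (hq2 : 0 < q2)
    (hsdef : s = nn/q1 + nn/q2) (hl : 0 < l) (hny : 0 < ny)
    (hL : l < a / ny ^ s) :
    l * ((a / l) ^ s⁻¹) ^ (nn/q1) ≤ a / ny ^ (nn/q2) := by
  have hs : 0 < s := by rw [hsdef]; positivity
  have hnys : 0 < ny ^ s := Real.rpow_pos_of_pos hny s
  have ha : 0 < a := by
    have h1 : 0 < a / ny ^ s * ny ^ s := mul_pos (hl.trans hL) hnys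
    rwa [div_mul_cancel₀ _ hnys.ne'] at h1
  set t : ℝ := nn / (s * q1) with ht_def
  have ht0 : 0 < t := by positivity
  have ht1 : t < 1 := by
    rw [ht_def, div_lt_one (by positivity)]
    have h2 : s * q1 = nn + nn * q1 / q2 := by rw [hsdef]; field_simp
    have h3 : 0 < nn * q1 / q2 := by positivity
    linarith
  have hId1 : l * ((a / l) ^ s⁻¹) ^ (nn/q1) = a ^ t * l ^ (1 - t) := by
    rw [← Real.rpow_mul (by positivity : (0:ℝ) ≤ a / l)]
    have h4 : s⁻¹ * (nn / q1) = t := by rw [ht_def]; field_simp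
    rw [h4, Real.div_rpow ha.le hl.le, Real.rpow_sub hl, Real.rpow_one]
    ring
  have hkey : s * (1 - t) = nn / q2 := by
    rw [ht_def, hsdef]; field_simp; ring
  have hId2 : a ^ t * (a / ny ^ s) ^ (1 - t) = a / ny ^ (nn/q2) := by
    rw [Real.div_rpow ha.le hnys.le, ← Real.rpow_mul hny.le, hkey, mul_div_assoc',
      ← Real.rpow_add ha]
    norm_num
  rw [hId1, ← hId2]
  have h5 : l ^ (1 - t) ≤ (a / ny ^ s) ^ (1 - t) :=
    Real.rpow_le_rpow hl.le hL.le (by linarith)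
  exact mul_le_mul_of_nonneg_left h5 (Real.rpow_nonneg ha.le t)

/-- Geometric inequality in the iterated weak norm: for `0 < q1, q2 < ∞` there
is a constant `C = C(q1, q2, n) > 0` such that for every non-negative measurable `F` on
`ℝ^n × ℝ^n`,
`‖F‖_{L^{q2,∞}(L^{q1,∞})} ≤ C · esssup F(x,y)·(|x+y| + |x−y|)^{n/q1 + n/q2}`. -/
theorem stmt17 (n : ℕ) (hn : 0 < n) (q1 q2 : ℝ) (hq1 : 0 < q1) (hq2 : 0 < q2) :
    ∃ C : ℝ, 0 < C ∧ ∀ F : Euc n × Euc n → ℝ, Measurable F → (∀ z, 0 ≤ F z) →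
      iteratedWeakNorm q1 q2 F ≤
        ENNReal.ofReal C *
          essSup (fun z : Euc n × Euc n =>
              ENNReal.ofReal (F z *
                (‖z.1 + z.2‖ + ‖z.1 - z.2‖) ^ ((n : ℝ) / q1 + (n : ℝ) / q2)))
            (volume : Measure (Euc n × Euc n)) := by
  have hnR : (0:ℝ) < n := Nat.cast_pos.mpr hn
  haveI : Nontrivial (Euc n) := ⟨0, EuclideanSpace.single ⟨0, hn⟩ 1, by
    intro h
    have := congrArg (fun v : Euc n => v ⟨0, hn⟩) h
    simp [EuclideanSpace.single_apply] at this⟩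
  set s : ℝ := (n : ℝ)/q1 + (n : ℝ)/q2 with hs_def
  have hs : 0 < s := by positivity
  set V : ℝ≥0∞ := volume (Metric.ball (0:Euc n) 1) with hV_def
  have hV0 : 0 < V := Metric.measure_ball_pos _ _ one_pos
  have hVt : V ≠ ⊤ := measure_ball_lt_top.ne
  set v : ℝ := V.toReal with hv_def
  have hv0 : 0 < v := ENNReal.toReal_pos hV0.ne' hVt
  have hVor : V = ENNReal.ofReal v := (ENNReal.ofReal_toReal hVt).symm
  refine ⟨v ^ (1/q1) * v ^ (1/q2), by positivity, ?_⟩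
  intro F hF hF0
  set A := essSup (fun z : Euc n × Euc n =>
      ENNReal.ofReal (F z * (‖z.1 + z.2‖ + ‖z.1 - z.2‖) ^ s))
    (volume : Measure (Euc n × Euc n)) with hA_def
  rcases eq_top_or_lt_top A with hAt | hAlt
  · rw [hAt, ENNReal.mul_top (by positivity : ENNReal.ofReal (v ^ (1/q1) * v ^ (1/q2)) ≠ 0)]
    exact le_top
  set a : ℝ := A.toReal with ha_def
  have ha0 : 0 ≤ a := ENNReal.toReal_nonneg
  have hoA : ENNReal.ofReal a = A := ENNReal.ofReal_toReal hAlt.ne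
  -- a.e. pointwise bound
  have hae : ∀ᵐ z ∂(volume : Measure (Euc n × Euc n)),
      F z * (‖z.1 + z.2‖ + ‖z.1 - z.2‖) ^ s ≤ a := by
    filter_upwards [ae_le_essSup (fun z : Euc n × Euc n =>
      ENNReal.ofReal (F z * (‖z.1 + z.2‖ + ‖z.1 - z.2‖) ^ s))] with z hz
    rw [← hA_def, ← hoA] at hz
    exact (ENNReal.ofReal_le_ofReal_iff ha0).mp hz
  -- sections
  have hy_ne : ∀ᵐ y : Euc n, y ≠ 0 := by
    have h0 : volume ({(0:Euc n)} : Set (Euc n)) = 0 := measure_singleton 0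
    rw [ae_iff]
    convert h0 using 2
    ext y; simp
  have hsec : ∀ᵐ y : Euc n, y ≠ 0 ∧
      ∀ᵐ x : Euc n, F (x, y) * (‖x + y‖ + ‖x - y‖) ^ s ≤ a := by
    refine hy_ne.and ?_
    have h1 : ∀ᵐ z ∂(volume : Measure (Euc n)).prod volume,
        F z * (‖z.1 + z.2‖ + ‖z.1 - z.2‖) ^ s ≤ a := by
      rw [← Measure.volume_eq_prod]; exact hae
    have h2 := Measure.measurePreserving_swap.quasiMeasurePreserving.ae h1
    exact Measure.ae_ae_of_ae_prod h2
  -- inner estimate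
  have hinner : ∀ᵐ y : Euc n, weakNorm volume q1 (fun x => F (x, y)) ≤
      ENNReal.ofReal ((v ^ (1/q1) * a) / ‖y‖ ^ ((n:ℝ)/q2)) := by
    filter_upwards [hsec] with y hy
    obtain ⟨hy0, hyx⟩ := hy
    have hny : 0 < ‖y‖ := norm_pos_iff.mpr hy0
    rw [weakNorm]
    apply iSup₂_le
    intro l hl
    by_cases hcase : l < a / ‖y‖ ^ s
    · -- nonempty case: set contained in ball of radius r
      set r : ℝ := (a / l) ^ s⁻¹ with hr_def
      have hr0 : 0 ≤ r := Real.rpow_nonneg (by positivity) _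
      have hsub : volume {x | l < |F (x, y)|} ≤ volume (Metric.ball (0:Euc n) r) := by
        apply measure_mono_ae
        filter_upwards [hyx] with x hx hmem
        replace hmem : l < |F (x, y)| := hmem
        rw [abs_of_nonneg (hF0 _)] at hmem
        have hw : ‖x‖ ≤ ‖x + y‖ + ‖x - y‖ := by
          have := norm_add_le (x + y) (x - y)
          have h2 : (x + y) + (x - y) = (2:ℝ) • x := by module
          rw [h2, norm_smul] at this
          norm_num at this
          linarith [norm_nonneg x]
        have hwy : ‖y‖ ≤ ‖x + y‖ + ‖x - y‖ := by
          have := norm_sub_le (x + y) (x - y)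
          have h2 : (x + y) - (x - y) = (2:ℝ) • y := by module
          rw [h2, norm_smul] at this
          norm_num at this
          linarith [norm_nonneg y]
        have hwpos : 0 < ‖x + y‖ + ‖x - y‖ := lt_of_lt_of_le hny hwy
        have hws : 0 < (‖x + y‖ + ‖x - y‖) ^ s := Real.rpow_pos_of_pos hwpos s
        have hlt : l * (‖x + y‖ + ‖x - y‖) ^ s < a :=
          lt_of_lt_of_le (by exact (mul_lt_mul_of_pos_right hmem hws)) hx
        have hxs : ‖x‖ ^ s ≤ (‖x + y‖ + ‖x - y‖) ^ s :=
          Real.rpow_le_rpow (norm_nonneg x) hw hs.le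
        have hxa : ‖x‖ ^ s < a / l := by
          rw [lt_div_iff₀ hl, mul_comm]
          exact lt_of_le_of_lt (mul_le_mul_of_nonneg_left hxs hl.le) hlt
        have hxr : ‖x‖ < r := by
          have h5 := Real.rpow_lt_rpow (Real.rpow_nonneg (norm_nonneg x) s) hxa
            (inv_pos.mpr hs)
          rwa [← Real.rpow_mul (norm_nonneg x), mul_inv_cancel₀ hs.ne',
            Real.rpow_one] at h5
        exact mem_ball_zero_iff.mpr hxr
      have hball : volume (Metric.ball (0:Euc n) r) = ENNReal.ofReal (r ^ n) * V := by
        rw [hV_def]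
        simpa using Measure.addHaar_ball (volume : Measure (Euc n)) (0:Euc n) hr0
      calc ENNReal.ofReal l * volume {x | l < |F (x, y)|} ^ (1/q1)
          ≤ ENNReal.ofReal l * (ENNReal.ofReal (r ^ n) * V) ^ (1/q1) := by
            rw [← hball]
            exact mul_le_mul_right (ENNReal.rpow_le_rpow hsub (by positivity)) _
        _ = ENNReal.ofReal (l * (r ^ ((n:ℝ)/q1) * v ^ (1/q1))) := by
            rw [hVor, ENNReal.mul_rpow_of_nonneg _ _ (by positivity : (0:ℝ) ≤ 1/q1),
              ENNReal.ofReal_rpow_of_nonneg (by positivity) (by positivity),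
              ENNReal.ofReal_rpow_of_nonneg hv0.le (by positivity),
              ← ENNReal.ofReal_mul (by positivity),
              ← ENNReal.ofReal_mul hl.le]
            congr 2
            rw [← Real.rpow_natCast r n, ← Real.rpow_mul hr0]
            congr 1
            field_simp
        _ ≤ ENNReal.ofReal ((v ^ (1/q1) * a) / ‖y‖ ^ ((n:ℝ)/q2)) := by
            apply ENNReal.ofReal_le_ofReal
            have h6 : l * r ^ ((n:ℝ)/q1) ≤ a / ‖y‖ ^ ((n:ℝ)/q2) :=
              realA (n:ℝ) q1 q2 s a l ‖y‖ hnR hq1 hq2 hs_def hl hny hcase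
            calc l * (r ^ ((n:ℝ)/q1) * v ^ (1/q1))
                = (l * r ^ ((n:ℝ)/q1)) * v ^ (1/q1) := by ring
              _ ≤ (a / ‖y‖ ^ ((n:ℝ)/q2)) * v ^ (1/q1) :=
                  mul_le_mul_of_nonneg_right h6 (by positivity)
              _ = (v ^ (1/q1) * a) / ‖y‖ ^ ((n:ℝ)/q2) := by ring
    · -- empty case
      have hS : volume {x | l < |F (x, y)|} = 0 := by
        rw [measure_eq_zero_iff_ae_notMem]
        filter_upwards [hyx] with x hx hmem
        replace hmem : l < |F (x, y)| := hmem
        rw [abs_of_nonneg (hF0 _)] at hmem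
        have hwy : ‖y‖ ≤ ‖x + y‖ + ‖x - y‖ := by
          have := norm_sub_le (x + y) (x - y)
          have h2 : (x + y) - (x - y) = (2:ℝ) • y := by module
          rw [h2, norm_smul] at this
          norm_num at this
          linarith [norm_nonneg y]
        have hwpos : 0 < ‖x + y‖ + ‖x - y‖ := lt_of_lt_of_le hny hwy
        have hws : 0 < (‖x + y‖ + ‖x - y‖) ^ s := Real.rpow_pos_of_pos hwpos s
        have hlt : l * (‖x + y‖ + ‖x - y‖) ^ s < a :=
          lt_of_lt_of_le (mul_lt_mul_of_pos_right hmem hws) hx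
        have hys : ‖y‖ ^ s ≤ (‖x + y‖ + ‖x - y‖) ^ s :=
          Real.rpow_le_rpow (norm_nonneg y) hwy hs.le
        have : l < a / ‖y‖ ^ s := by
          rw [lt_div_iff₀ (Real.rpow_pos_of_pos hny s)]
          exact lt_of_le_of_lt (mul_le_mul_of_nonneg_left hys hl.le) hlt
        exact hcase this
      rw [hS, ENNReal.zero_rpow_of_pos (by positivity : (0:ℝ) < 1/q1), mul_zero]
      exact zero_le
  -- outer estimate
  rw [iteratedWeakNorm]
  apply iSup₂_le
  intro l hl
  set c : ℝ := v ^ (1/q1) * a with hc_def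
  have hc0 : 0 ≤ c := by positivity
  set ρ : ℝ := (c / l) ^ (q2 / (n:ℝ)) with hρ_def
  have hρ0 : 0 ≤ ρ := Real.rpow_nonneg (by positivity) _
  have hsub : volume {y : Euc n | ENNReal.ofReal l < weakNorm volume q1 fun x => F (x, y)} ≤
      volume (Metric.ball (0:Euc n) ρ) := by
    apply measure_mono_ae
    filter_upwards [hinner] with y hy hmem
    replace hmem : ENNReal.ofReal l < weakNorm volume q1 (fun x => F (x, y)) := hmem
    have h1 : ENNReal.ofReal l < ENNReal.ofReal (c / ‖y‖ ^ ((n:ℝ)/q2)) :=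
      lt_of_lt_of_le hmem hy
    have h2 : l < c / ‖y‖ ^ ((n:ℝ)/q2) := by
      by_contra hcon
      push_neg at hcon
      exact absurd (lt_of_lt_of_le h1 (ENNReal.ofReal_le_ofReal hcon)) (lt_irrefl _)
    have hy0 : 0 < ‖y‖ := by
      rcases (norm_nonneg y).lt_or_eq with h | h
      · exact h
      · exfalso
        rw [← h, Real.zero_rpow (by positivity : ((n:ℝ)/q2) ≠ 0), _root_.div_zero] at h2
        exact absurd (hl.trans h2) (lt_irrefl _)
    have hp : 0 < ‖y‖ ^ ((n:ℝ)/q2) := Real.rpow_pos_of_pos hy0 _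
    have h3 : ‖y‖ ^ ((n:ℝ)/q2) < c / l := by
      rw [lt_div_iff₀ hl, mul_comm]
      exact (lt_div_iff₀ hp).mp h2
    have h4 : ‖y‖ < ρ := by
      have h5 := Real.rpow_lt_rpow (Real.rpow_nonneg (norm_nonneg y) _) h3
        (by positivity : (0:ℝ) < q2/(n:ℝ))
      have hone : ((n:ℝ)/q2) * (q2/(n:ℝ)) = 1 := by field_simp
      rwa [← Real.rpow_mul (norm_nonneg y), hone, Real.rpow_one] at h5
    exact mem_ball_zero_iff.mpr h4
  have hball : volume (Metric.ball (0:Euc n) ρ) = ENNReal.ofReal (ρ ^ n) * V := by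
    rw [hV_def]
    simpa using Measure.addHaar_ball (volume : Measure (Euc n)) (0:Euc n) hρ0
  calc ENNReal.ofReal l *
        volume {y : Euc n | ENNReal.ofReal l < weakNorm volume q1 fun x => F (x, y)} ^ (1/q2)
      ≤ ENNReal.ofReal l * (ENNReal.ofReal (ρ ^ n) * V) ^ (1/q2) := by
        rw [← hball]
        exact mul_le_mul_right (ENNReal.rpow_le_rpow hsub (by positivity)) _
    _ = ENNReal.ofReal (l * (ρ ^ ((n:ℝ)/q2) * v ^ (1/q2))) := by
        rw [hVor, ENNReal.mul_rpow_of_nonneg _ _ (by positivity : (0:ℝ) ≤ 1/q2),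
          ENNReal.ofReal_rpow_of_nonneg (by positivity) (by positivity),
          ENNReal.ofReal_rpow_of_nonneg hv0.le (by positivity),
          ← ENNReal.ofReal_mul (by positivity),
          ← ENNReal.ofReal_mul hl.le]
        congr 2
        rw [← Real.rpow_natCast ρ n, ← Real.rpow_mul hρ0]
        congr 1
        field_simp
    _ ≤ ENNReal.ofReal (v ^ (1/q1) * v ^ (1/q2)) * A := by
        have hρpow : ρ ^ ((n:ℝ)/q2) ≤ c / l := by
          rw [hρ_def, ← Real.rpow_mul (by positivity : (0:ℝ) ≤ c / l)]
          have hone : (q2/(n:ℝ)) * ((n:ℝ)/q2) = 1 := by field_simp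
          rw [hone, Real.rpow_one]
        have h7 : l * (ρ ^ ((n:ℝ)/q2) * v ^ (1/q2)) ≤ v ^ (1/q1) * v ^ (1/q2) * a := by
          calc l * (ρ ^ ((n:ℝ)/q2) * v ^ (1/q2))
              ≤ l * ((c / l) * v ^ (1/q2)) := by
                apply mul_le_mul_of_nonneg_left _ hl.le
                exact mul_le_mul_of_nonneg_right hρpow (by positivity)
            _ = c * v ^ (1/q2) := by field_simp
            _ = v ^ (1/q1) * v ^ (1/q2) * a := by rw [hc_def]; ring
        calc ENNReal.ofReal (l * (ρ ^ ((n:ℝ)/q2) * v ^ (1/q2)))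
            ≤ ENNReal.ofReal (v ^ (1/q1) * v ^ (1/q2) * a) := ENNReal.ofReal_le_ofReal h7
          _ = ENNReal.ofReal (v ^ (1/q1) * v ^ (1/q2)) * ENNReal.ofReal a :=
              ENNReal.ofReal_mul (by positivity)
          _ = ENNReal.ofReal (v ^ (1/q1) * v ^ (1/q2)) * A := by rw [hoA]
end
end

section
/- Supremum geometric inequality (isodiametric-type): let 0 < p1, p2 < ∞. There exists a constant C depending only on p1, p2, n such that for all non-negative measurable functions f, g on ℝ^n, ‖f‖_{L^{p1}} · ‖g‖_{L^{p2}} ≤ C · esssup_{(x,y) ∈ ℝ^n×ℝ^n} f(x)·g(y)·|x−y|^{n/p1 + n/p2}, where |·| is the Euclidean norm and ‖·‖_{L^{p}} = (∫_{ℝ^n} |·|^{p})^{1/p}. -/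
open MeasureTheory ENNReal Filter Topology Set Metric

noncomputable section

/- ### Auxiliary lemmas for stmt18 -/

/-- Swapping the two factors in an a.e. product bound. -/
lemma aux_swap {n : ℕ} {αr M' : ℝ} {f g : Euc n → ℝ}
    (hae : ∀ᵐ z : Euc n × Euc n, f z.1 * g z.2 * ‖z.1 - z.2‖ ^ αr ≤ M') :
    ∀ᵐ z : Euc n × Euc n, g z.1 * f z.2 * ‖z.1 - z.2‖ ^ αr ≤ M' := by
  rw [Measure.volume_eq_prod] at hae ⊢
  have h := (Measure.measurePreserving_swap (μ := (volume : Measure (Euc n))) (ν := volume)).quasiMeasurePreserving.ae hae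
  filter_upwards [h] with z hz
  rw [show g z.1 * f z.2 = f z.2 * g z.1 from mul_comm _ _, norm_sub_rev]
  exact hz

/-- Distribution function bound from the essential supremum bound. -/
lemma aux_distBound {n : ℕ} {αr : ℝ} (hα : 0 < αr)
    (f g : Euc n → ℝ) {M' : ℝ} (hM' : 0 ≤ M')
    (hae : ∀ᵐ z : Euc n × Euc n, f z.1 * g z.2 * ‖z.1 - z.2‖ ^ αr ≤ M')
    {μ0 : ℝ} (hμ0 : 0 < μ0) (hgpos : 0 < volume {y : Euc n | μ0 < g y})
    {t : ℝ} (ht : 0 < t) :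
    volume {x : Euc n | t < f x} ≤
      volume (closedBall (0 : Euc n) 1) *
        ENNReal.ofReal ((M' / (t * μ0)) ^ ((n : ℝ) / αr)) := by
  -- pass to iterated a.e. statement with `y` outside
  have hswap : ∀ᵐ z : Euc n × Euc n, g z.1 * f z.2 * ‖z.1 - z.2‖ ^ αr ≤ M' := aux_swap hae
  rw [Measure.volume_eq_prod] at hswap
  have h2 := Measure.ae_ae_of_ae_prod hswap
  -- find a good point y0
  have hQnull : volume {y : Euc n |
      ¬ (∀ᵐ x : Euc n, g y * f x * ‖y - x‖ ^ αr ≤ M')} = 0 := by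
    exact ae_iff.mp h2
  have hpos2 : 0 < volume ({y : Euc n | μ0 < g y} ∩
      {y : Euc n | ∀ᵐ x : Euc n, g y * f x * ‖y - x‖ ^ αr ≤ M'}) := by
    have hle : volume {y : Euc n | μ0 < g y} ≤
        volume ({y : Euc n | μ0 < g y} ∩
          {y : Euc n | ∀ᵐ x : Euc n, g y * f x * ‖y - x‖ ^ αr ≤ M'}) +
        volume {y : Euc n | ¬ (∀ᵐ x : Euc n, g y * f x * ‖y - x‖ ^ αr ≤ M')} := by
      refine (measure_mono ?_).trans (measure_union_le _ _)
      intro y hy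
      by_cases hQ : ∀ᵐ x : Euc n, g y * f x * ‖y - x‖ ^ αr ≤ M'
      · exact Or.inl ⟨hy, hQ⟩
      · exact Or.inr hQ
    rw [hQnull, add_zero] at hle
    exact lt_of_lt_of_le hgpos hle
  obtain ⟨y0, hy0g, hy0⟩ := nonempty_of_measure_ne_zero hpos2.ne'
  set R : ℝ := (M' / (t * μ0)) ^ (1 / αr) with hRdef
  have hRnn : 0 ≤ R := Real.rpow_nonneg (by positivity) _
  -- a.e. inclusion into a ball
  have hnull : volume ({x : Euc n | t < f x} \ closedBall y0 R) = 0 := by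
    refine measure_mono_null ?_ (ae_iff.mp hy0)
    rintro x ⟨hx1, hx2⟩
    simp only [mem_setOf_eq, not_le]
    have hd : R < ‖y0 - x‖ := by
      rw [mem_closedBall, dist_eq_norm] at hx2
      push_neg at hx2
      calc R < ‖x - y0‖ := hx2
        _ = ‖y0 - x‖ := norm_sub_rev _ _
    have hRα : R ^ αr = M' / (t * μ0) := by
      rw [hRdef, one_div, Real.rpow_inv_rpow (by positivity) hα.ne']
    have h1 : M' / (t * μ0) < ‖y0 - x‖ ^ αr := by
      rw [← hRα]; exact Real.rpow_lt_rpow hRnn hd hα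
    have h2' : t * μ0 * (M' / (t * μ0)) < g y0 * f x * ‖y0 - x‖ ^ αr := by
      have hfg : t * μ0 < g y0 * f x := by
        rw [show t * μ0 = μ0 * t from mul_comm _ _]
        exact mul_lt_mul'' hy0g hx1 hμ0.le ht.le
      exact mul_lt_mul'' hfg h1 (by positivity) (by positivity)
    calc M' = t * μ0 * (M' / (t * μ0)) := by field_simp
      _ < g y0 * f x * ‖y0 - x‖ ^ αr := h2'
  have hsub : {x : Euc n | t < f x} ≤ᵐ[volume] closedBall y0 R := ae_le_set.mpr hnull
  calc volume {x : Euc n | t < f x} ≤ volume (closedBall y0 R) := measure_mono_ae hsub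
    _ = ENNReal.ofReal (R ^ Module.finrank ℝ (Euc n)) * volume (closedBall (0 : Euc n) 1) :=
        Measure.addHaar_closedBall' volume y0 hRnn
    _ = volume (closedBall (0 : Euc n) 1) *
        ENNReal.ofReal ((M' / (t * μ0)) ^ ((n : ℝ) / αr)) := by
        rw [mul_comm]
        congr 2
        rw [finrank_euclideanSpace_fin, ← Real.rpow_natCast R n, hRdef,
          ← Real.rpow_mul (by positivity)]
        congr 1
        field_simp
  done

/-- Positivity of a level set from nonvanishing of the strong norm. -/
lemma aux_exists_level {n : ℕ} {p : ℝ} (hp : 0 < p) (f : Euc n → ℝ) (hfn : ∀ x, 0 ≤ f x)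
    (h : strongNorm (volume : Measure (Euc n)) p f ≠ 0) :
    ∃ t : ℝ, 0 < t ∧ 0 < volume {x : Euc n | t < f x} := by
  by_contra hc
  push_neg at hc
  apply h
  have hz : ∀ᵐ x : Euc n, f x = 0 := by
    have hsub : {x : Euc n | 0 < f x} ⊆ ⋃ k : ℕ, {x : Euc n | 1 / ((k : ℝ) + 1) < f x} := by
      intro x hx
      obtain ⟨k, hk⟩ := exists_nat_one_div_lt (show (0:ℝ) < f x from hx)
      exact mem_iUnion.mpr ⟨k, hk⟩
    have h0 : volume {x : Euc n | 0 < f x} = 0 := by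
      refine measure_mono_null hsub (measure_iUnion_null fun k => ?_)
      have := hc (1 / ((k : ℝ) + 1)) (by positivity)
      exact le_antisymm this zero_le
    rw [ae_iff]
    refine measure_mono_null ?_ h0
    intro x hx
    exact lt_of_le_of_ne (hfn x) (Ne.symm hx)
  rw [strongNorm]
  have hi : ∫⁻ x : Euc n, ENNReal.ofReal |f x| ^ p ∂(volume : Measure (Euc n)) = 0 := by
    have hcong : (fun x : Euc n => ENNReal.ofReal |f x| ^ p) =ᵐ[volume] fun _ => 0 :=
      hz.mono fun x hx => by simp [hx, ENNReal.zero_rpow_of_pos hp]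
    rw [lintegral_congr_ae hcong, lintegral_zero]
  rw [hi, ENNReal.zero_rpow_of_pos (by positivity)]

/-- A critical level: `f ≤ lam` a.e. while `{f > lam/2}` has positive measure. -/
lemma aux_crit_level {n : ℕ} (f : Euc n → ℝ) {t1 lamF : ℝ} (ht1 : 0 < t1)
    (h1 : 0 < volume {x : Euc n | t1 < f x}) (h2 : volume {x : Euc n | lamF < f x} = 0) :
    ∃ lam : ℝ, 0 < lam ∧ (∀ᵐ x : Euc n, f x ≤ lam) ∧
      0 < volume {x : Euc n | lam / 2 < f x} := by
  set S : Set ℝ := {t | 0 < t ∧ volume {x : Euc n | t < f x} = 0} with hS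
  have hne : S.Nonempty := by
    refine ⟨max lamF t1, lt_of_lt_of_le ht1 (le_max_right _ _), ?_⟩
    refine measure_mono_null (fun x hx => ?_) h2
    exact lt_of_le_of_lt (le_max_left _ _) (show max lamF t1 < f x from hx)
  have hbdd : BddBelow S := ⟨0, fun t ht => ht.1.le⟩
  set lam : ℝ := sInf S with hlamdef
  have hlam1 : t1 ≤ lam := by
    refine le_csInf hne fun t ht => ?_
    by_contra hcon
    push_neg at hcon
    have : volume {x : Euc n | t1 < f x} = 0 := by
      refine measure_mono_null (fun x hx => ?_) ht.2
      exact lt_trans hcon hx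
    rw [this] at h1; exact lt_irrefl _ h1
  have hlampos : 0 < lam := lt_of_lt_of_le ht1 hlam1
  refine ⟨lam, hlampos, ?_, ?_⟩
  · rw [ae_iff]
    have hsub : {x : Euc n | ¬ f x ≤ lam} ⊆
        ⋃ k : ℕ, {x : Euc n | lam + 1 / ((k : ℝ) + 1) < f x} := by
      intro x hx
      simp only [mem_setOf_eq, not_le] at hx
      obtain ⟨k, hk⟩ := exists_nat_one_div_lt (sub_pos.mpr hx)
      exact mem_iUnion.mpr ⟨k, by simp only [mem_setOf_eq]; linarith⟩
    refine measure_mono_null hsub (measure_iUnion_null fun k => ?_)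
    have hε : (0 : ℝ) < 1 / ((k : ℝ) + 1) := by positivity
    obtain ⟨t, htS, htlt⟩ := exists_lt_of_csInf_lt hne
      (show sInf S < lam + 1 / ((k : ℝ) + 1) by rw [← hlamdef]; linarith)
    refine measure_mono_null (fun x hx => ?_) htS.2
    exact lt_of_le_of_lt htlt.le hx
  · by_contra hcon
    have h0 : volume {x : Euc n | lam / 2 < f x} = 0 :=
      le_antisymm (le_of_not_gt hcon) zero_le
    have : lam ≤ lam / 2 := csInf_le hbdd ⟨by linarith, h0⟩
    linarith

/-- Essential boundedness from finiteness of the essential supremum. -/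
lemma aux_esssup_fin {n : ℕ} {αr : ℝ} (hα : 0 < αr) (hq : 0 < (n : ℝ) / αr)
    (f g : Euc n → ℝ) {M' : ℝ} (hM' : 0 ≤ M')
    (hae' : ∀ᵐ z : Euc n × Euc n, g z.1 * f z.2 * ‖z.1 - z.2‖ ^ αr ≤ M')
    {s0 : ℝ} (hs0 : 0 < s0) (hgs0 : 0 < volume {y : Euc n | s0 < g y}) :
    ∃ lamF : ℝ, 0 < lamF ∧ volume {x : Euc n | lamF < f x} = 0 := by
  by_contra hc
  push_neg at hc
  set q : ℝ := (n : ℝ) / αr with hqdef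
  have hbound : ∀ t : ℝ, 0 < t → volume {y : Euc n | s0 < g y} ≤
      volume (closedBall (0 : Euc n) 1) * ENNReal.ofReal ((M' / (s0 * t)) ^ q) := by
    intro t ht
    have hfpos : 0 < volume {x : Euc n | t < f x} := by
      rcases (show 0 ≤ volume {x : Euc n | t < f x} from zero_le).lt_or_eq with h | h
      · exact h
      · exact absurd h.symm (hc t ht)
    exact aux_distBound hα g f hM' hae' ht hfpos hs0
  -- the bound tends to zero
  have htend : Tendsto (fun t : ℝ => volume (closedBall (0 : Euc n) 1) *
      ENNReal.ofReal ((M' / (s0 * t)) ^ q)) atTop (𝓝 0) := by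
    have h1 : Tendsto (fun t : ℝ => M' / (s0 * t)) atTop (𝓝 0) := by
      apply Tendsto.div_atTop tendsto_const_nhds
      exact Tendsto.const_mul_atTop hs0 tendsto_id
    have h2 : Tendsto (fun t : ℝ => (M' / (s0 * t)) ^ q) atTop (𝓝 0) := by
      have := h1.rpow_const (p := q) (Or.inr hq.le)
      rwa [Real.zero_rpow hq.ne'] at this
    have h3 : Tendsto (fun t : ℝ => ENNReal.ofReal ((M' / (s0 * t)) ^ q)) atTop (𝓝 0) := by
      have := ENNReal.tendsto_ofReal h2
      rwa [ENNReal.ofReal_zero] at this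
    have h4 := ENNReal.Tendsto.const_mul h3
      (Or.inr (measure_closedBall_lt_top (μ := (volume : Measure (Euc n))) (x := (0 : Euc n)) (r := 1)).ne)
    rwa [mul_zero] at h4
  obtain ⟨t, ht1, ht2⟩ := ((htend.eventually_lt_const hgs0).and (eventually_gt_atTop 0)).exists
  exact absurd (hbound t ht2) (not_le.mpr ht1)

/-- From a power-decay distribution bound plus an a.e. upper bound, bound the strong norm. -/
lemma aux_normBound {n : ℕ} {p q : ℝ} (hp : 0 < p) (hq : 0 < q) (hqp : q < p)
    (f : Euc n → ℝ) (hf : Measurable f) (hfn : ∀ x, 0 ≤ f x)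
    {A lam : ℝ} (hA : 0 ≤ A) (hlam : 0 < lam)
    (hbd : ∀ t : ℝ, 0 < t → volume {x : Euc n | t < f x} ≤ ENNReal.ofReal (A * t ^ (-q)))
    (hup : ∀ᵐ x : Euc n, f x ≤ lam) :
    strongNorm (volume : Measure (Euc n)) p f ≤
      ENNReal.ofReal ((p * A * (lam ^ (p - q) / (p - q))) ^ (1 / p)) := by
  have habs : ∀ x : Euc n, |f x| = f x := fun x => abs_of_nonneg (hfn x)
  have hlayer : ∫⁻ x : Euc n, ENNReal.ofReal |f x| ^ p ∂volume =
      ENNReal.ofReal p * ∫⁻ t in Ioi (0:ℝ),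
        volume {a : Euc n | t < f a} * ENNReal.ofReal (t ^ (p - 1)) := by
    rw [← lintegral_rpow_eq_lintegral_meas_lt_mul volume
      (ae_of_all _ hfn) hf.aemeasurable hp]
    congr 1
    ext x
    rw [habs x, ENNReal.ofReal_rpow_of_nonneg (hfn x) hp.le]
  have hnullset : volume {x : Euc n | lam < f x} = 0 := by
    have := ae_iff.mp hup
    simpa only [not_le] using this
  have hIoi : Ioi (0:ℝ) = Ioc 0 lam ∪ Ioi lam := (Ioc_union_Ioi_eq_Ioi hlam.le).symm
  have hsplit : ∫⁻ t in Ioi (0:ℝ),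
      volume {a : Euc n | t < f a} * ENNReal.ofReal (t ^ (p - 1)) =
      (∫⁻ t in Ioc (0:ℝ) lam, volume {a : Euc n | t < f a} * ENNReal.ofReal (t ^ (p - 1))) +
      ∫⁻ t in Ioi lam, volume {a : Euc n | t < f a} * ENNReal.ofReal (t ^ (p - 1)) := by
    rw [hIoi, lintegral_union measurableSet_Ioi Ioc_disjoint_Ioi_same]
  have htail : ∫⁻ t in Ioi lam,
      volume {a : Euc n | t < f a} * ENNReal.ofReal (t ^ (p - 1)) = 0 := by
    rw [setLIntegral_congr_fun measurableSet_Ioi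
      (fun t (ht : t ∈ Ioi lam) => ?_), lintegral_zero]
    have : volume {a : Euc n | t < f a} = 0 := by
      refine measure_mono_null (fun x hx => ?_) hnullset
      exact lt_trans (show lam < t from ht) hx
    rw [this, zero_mul]
  have hmain : ∫⁻ t in Ioc (0:ℝ) lam,
      volume {a : Euc n | t < f a} * ENNReal.ofReal (t ^ (p - 1)) ≤
      ∫⁻ t in Ioc (0:ℝ) lam, ENNReal.ofReal (A * t ^ (p - 1 - q)) := by
    refine setLIntegral_mono (by fun_prop) fun t ht => ?_
    have ht0 : 0 < t := ht.1
    calc volume {a : Euc n | t < f a} * ENNReal.ofReal (t ^ (p - 1)) ≤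
        ENNReal.ofReal (A * t ^ (-q)) * ENNReal.ofReal (t ^ (p - 1)) :=
          mul_le_mul_left (hbd t ht0) _
      _ = ENNReal.ofReal (A * t ^ (p - 1 - q)) := by
          rw [← ENNReal.ofReal_mul (by positivity), mul_assoc,
            ← Real.rpow_add ht0, show -q + (p - 1) = p - 1 - q from by ring]
  have hval : ∫⁻ t in Ioc (0:ℝ) lam, ENNReal.ofReal (A * t ^ (p - 1 - q)) =
      ENNReal.ofReal A * ENNReal.ofReal (lam ^ (p - q) / (p - q)) := by
    have hs : (-1 : ℝ) < p - 1 - q := by linarith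
    have hint : IntegrableOn (fun t : ℝ => t ^ (p - 1 - q)) (Ioc 0 lam) := by
      rw [← intervalIntegrable_iff_integrableOn_Ioc_of_le hlam.le]
      exact intervalIntegral.intervalIntegrable_rpow' hs
    have hnn : 0 ≤ᵐ[(volume : Measure ℝ).restrict (Ioc 0 lam)]
        fun t : ℝ => t ^ (p - 1 - q) := by
      rw [EventuallyLE, ae_restrict_iff' measurableSet_Ioc]
      exact ae_of_all _ fun t ht => Real.rpow_nonneg ht.1.le _
    have hval0 : ∫ t in Ioc (0:ℝ) lam, t ^ (p - 1 - q) = lam ^ (p - q) / (p - q) := by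
      rw [← intervalIntegral.integral_of_le hlam.le,
        integral_rpow (Or.inl hs),
        Real.zero_rpow (by linarith : p - 1 - q + 1 ≠ 0), sub_zero,
        show p - 1 - q + 1 = p - q from by ring]
    calc ∫⁻ t in Ioc (0:ℝ) lam, ENNReal.ofReal (A * t ^ (p - 1 - q)) =
        ∫⁻ t in Ioc (0:ℝ) lam, ENNReal.ofReal A * ENNReal.ofReal (t ^ (p - 1 - q)) := by
          refine setLIntegral_congr_fun measurableSet_Ioc (fun t ht => ?_)
          rw [← ENNReal.ofReal_mul hA]
      _ = ENNReal.ofReal A * ∫⁻ t in Ioc (0:ℝ) lam, ENNReal.ofReal (t ^ (p - 1 - q)) :=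
          lintegral_const_mul' _ _ ENNReal.ofReal_ne_top
      _ = ENNReal.ofReal A * ENNReal.ofReal (lam ^ (p - q) / (p - q)) := by
          rw [← ofReal_integral_eq_lintegral_ofReal hint hnn, hval0]
  have hfinal : ∫⁻ x : Euc n, ENNReal.ofReal |f x| ^ p ∂volume ≤
      ENNReal.ofReal (p * A * (lam ^ (p - q) / (p - q))) := by
    rw [hlayer, hsplit, htail, add_zero]
    calc ENNReal.ofReal p * ∫⁻ t in Ioc (0:ℝ) lam,
        volume {a : Euc n | t < f a} * ENNReal.ofReal (t ^ (p - 1)) ≤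
        ENNReal.ofReal p * (ENNReal.ofReal A * ENNReal.ofReal (lam ^ (p - q) / (p - q))) := by
          exact mul_le_mul_right (le_trans hmain (le_of_eq hval)) _
      _ = ENNReal.ofReal (p * A * (lam ^ (p - q) / (p - q))) := by
          rw [← ENNReal.ofReal_mul hA, ← ENNReal.ofReal_mul hp.le, mul_assoc]
  calc strongNorm (volume : Measure (Euc n)) p f =
      (∫⁻ x : Euc n, ENNReal.ofReal |f x| ^ p ∂volume) ^ (1/p) := rfl
    _ ≤ (ENNReal.ofReal (p * A * (lam ^ (p - q) / (p - q)))) ^ (1/p) :=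
        ENNReal.rpow_le_rpow hfinal (by positivity)
    _ = ENNReal.ofReal ((p * A * (lam ^ (p - q) / (p - q))) ^ (1 / p)) := by
        rw [← ENNReal.ofReal_rpow_of_nonneg (mul_nonneg (mul_nonneg hp.le hA)
          (div_nonneg (Real.rpow_nonneg hlam.le _) (by linarith))) (by positivity)]

theorem stmt18 (n : ℕ) (hn : 0 < n) (p1 p2 : ℝ) (hp1 : 0 < p1) (hp2 : 0 < p2) :
    ∃ C : ℝ, 0 < C ∧ ∀ f g : Euc n → ℝ, Measurable f → Measurable g →
      (∀ x, 0 ≤ f x) → (∀ x, 0 ≤ g x) →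
      strongNorm (volume : Measure (Euc n)) p1 f *
          strongNorm (volume : Measure (Euc n)) p2 g ≤
        ENNReal.ofReal C *
          essSup (fun z : Euc n × Euc n =>
              ENNReal.ofReal (f z.1 * g z.2 *
                ‖z.1 - z.2‖ ^ ((n : ℝ) / p1 + (n : ℝ) / p2)))
            (volume : Measure (Euc n × Euc n)) := by
  have hnR : (0:ℝ) < n := Nat.cast_pos.mpr hn
  set αr : ℝ := (n : ℝ) / p1 + (n : ℝ) / p2 with hαrdef
  have hα : 0 < αr := by positivity
  set q : ℝ := (n : ℝ) / αr with hqdef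
  have hq : 0 < q := by positivity
  have hqid : q * (p1 + p2) = p1 * p2 := by
    rw [hqdef, hαrdef]
    field_simp
    ring
  have hqp1 : q < p1 := by nlinarith [mul_pos hp1 hp1, add_pos hp1 hp2]
  have hqp2 : q < p2 := by nlinarith [mul_pos hp2 hp2, add_pos hp1 hp2]
  set κ : ℝ := (volume (closedBall (0 : Euc n) 1)).toReal with hκdef
  have hκ : 0 < κ := ENNReal.toReal_pos
    (measure_closedBall_pos _ _ one_pos).ne' measure_closedBall_lt_top.ne
  have hKB : volume (closedBall (0 : Euc n) 1) = ENNReal.ofReal κ :=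
    (ENNReal.ofReal_toReal measure_closedBall_lt_top.ne).symm
  set C : ℝ := (p1 * (κ * 2 ^ q) / (p1 - q)) ^ (1/p1) *
    (p2 * (κ * 2 ^ q) / (p2 - q)) ^ (1/p2) with hCdef
  have hp1q : 0 < p1 - q := by linarith
  have hp2q : 0 < p2 - q := by linarith
  have hC : 0 < C := by
    have h1 : 0 < p1 * (κ * 2 ^ q) / (p1 - q) := div_pos (by positivity) hp1q
    have h2 : 0 < p2 * (κ * 2 ^ q) / (p2 - q) := div_pos (by positivity) hp2q
    exact mul_pos (Real.rpow_pos_of_pos h1 _) (Real.rpow_pos_of_pos h2 _)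
  refine ⟨C, hC, fun f g hf hg hfn hgn => ?_⟩
  set M := essSup (fun z : Euc n × Euc n =>
    ENNReal.ofReal (f z.1 * g z.2 * ‖z.1 - z.2‖ ^ αr))
    (volume : Measure (Euc n × Euc n)) with hMdef
  by_cases hMtop : M = ⊤
  · rw [hMtop, ENNReal.mul_top (ENNReal.ofReal_pos.mpr hC).ne']
    exact le_top
  by_cases hf0 : strongNorm (volume : Measure (Euc n)) p1 f = 0
  · rw [hf0, zero_mul]; exact zero_le
  by_cases hg0 : strongNorm (volume : Measure (Euc n)) p2 g = 0
  · rw [hg0, mul_zero]; exact zero_le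
  set M' : ℝ := M.toReal with hM'def
  have hM'nn : 0 ≤ M' := ENNReal.toReal_nonneg
  have hae : ∀ᵐ z : Euc n × Euc n, f z.1 * g z.2 * ‖z.1 - z.2‖ ^ αr ≤ M' := by
    filter_upwards [ae_le_essSup (μ := (volume : Measure (Euc n × Euc n)))
      (fun z : Euc n × Euc n => ENNReal.ofReal (f z.1 * g z.2 * ‖z.1 - z.2‖ ^ αr))] with z hz
    rw [← hMdef, ← ENNReal.ofReal_toReal hMtop] at hz
    exact (ENNReal.ofReal_le_ofReal_iff hM'nn).mp hz
  have hae_sw : ∀ᵐ z : Euc n × Euc n, g z.1 * f z.2 * ‖z.1 - z.2‖ ^ αr ≤ M' := aux_swap hae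
  obtain ⟨t0, ht0, hft0⟩ := aux_exists_level hp1 f hfn hf0
  obtain ⟨s0, hs0, hgs0⟩ := aux_exists_level hp2 g hgn hg0
  have hM'pos : 0 < M' := by
    rcases hM'nn.lt_or_eq with h | h
    · exact h
    · exfalso
      have hb := aux_distBound hα f g hM'nn hae hs0 hgs0 ht0
      rw [← h] at hb
      have hz : ((0:ℝ) / (t0 * s0)) ^ ((n:ℝ)/αr) = 0 := by
        rw [zero_div, Real.zero_rpow (by positivity : (n:ℝ)/αr ≠ 0)]
      rw [hz, ENNReal.ofReal_zero, mul_zero] at hb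
      exact absurd (nonpos_iff_eq_zero.mp hb) hft0.ne'
  obtain ⟨lamF, hlamF, hlamF0⟩ := aux_esssup_fin hα hq f g hM'nn hae_sw hs0 hgs0
  obtain ⟨lamG, hlamG, hlamG0⟩ := aux_esssup_fin hα hq g f hM'nn hae ht0 hft0
  obtain ⟨lam, hlam, hlamup, hlamlow⟩ := aux_crit_level f ht0 hft0 hlamF0
  obtain ⟨mu, hmu, hmuup, hmulow⟩ := aux_crit_level g hs0 hgs0 hlamG0
  -- distribution bounds in the form needed by `aux_normBound`
  have key : ∀ (h1 h2 : Euc n → ℝ), (∀ᵐ z : Euc n × Euc n,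
        h1 z.1 * h2 z.2 * ‖z.1 - z.2‖ ^ αr ≤ M') → ∀ (m0 : ℝ), 0 < m0 →
      0 < volume {y : Euc n | m0 / 2 < h2 y} → ∀ t : ℝ, 0 < t →
      volume {x : Euc n | t < h1 x} ≤
        ENNReal.ofReal ((κ * (M' / (m0 / 2)) ^ q) * t ^ (-q)) := by
    intro h1 h2 haeh m0 hm0 hm0low t ht
    have hb := aux_distBound hα h1 h2 hM'nn haeh (half_pos hm0) hm0low ht
    rw [hKB] at hb
    refine hb.trans_eq ?_
    rw [← ENNReal.ofReal_mul hκ.le]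
    congr 1
    rw [mul_assoc]
    congr 1
    have he : M' / (t * (m0 / 2)) = (M' / (m0 / 2)) * t⁻¹ := by
      field_simp
    rw [he, Real.mul_rpow (by positivity) (by positivity),
      Real.inv_rpow ht.le, ← Real.rpow_neg ht.le, ← hqdef]
  have hbdf : ∀ t : ℝ, 0 < t → volume {x : Euc n | t < f x} ≤
      ENNReal.ofReal ((κ * (M' / (mu / 2)) ^ q) * t ^ (-q)) :=
    key f g hae mu hmu hmulow
  have hbdg : ∀ t : ℝ, 0 < t → volume {x : Euc n | t < g x} ≤
      ENNReal.ofReal ((κ * (M' / (lam / 2)) ^ q) * t ^ (-q)) :=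
    key g f hae_sw lam hlam hlamlow
  have hNf := aux_normBound hp1 hq hqp1 f hf hfn
    (A := κ * (M' / (mu / 2)) ^ q) (by positivity) hlam hbdf hlamup
  have hNg := aux_normBound hp2 hq hqp2 g hg hgn
    (A := κ * (M' / (lam / 2)) ^ q) (by positivity) hmu hbdg hmuup
  set X1 : ℝ := (p1 * (κ * (M' / (mu / 2)) ^ q) * (lam ^ (p1 - q) / (p1 - q))) ^ (1 / p1)
    with hX1def
  set X2 : ℝ := (p2 * (κ * (M' / (lam / 2)) ^ q) * (mu ^ (p2 - q) / (p2 - q))) ^ (1 / p2)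
    with hX2def
  have hX1nn : 0 ≤ X1 := Real.rpow_nonneg (mul_nonneg (mul_nonneg hp1.le
    (by positivity)) (div_nonneg (Real.rpow_nonneg hlam.le _) hp1q.le)) _
  -- scalar exponent identities
  have hsum : q / p1 + q / p2 = 1 := by
    field_simp
    linarith [hqid]
  have hexp1 : (p1 - q) / p1 + -(q / p2) = 0 := by
    have : (p1 - q) / p1 = 1 - q / p1 := by field_simp
    rw [this]; linarith [hsum]
  have hexp2 : (p2 - q) / p2 + -(q / p1) = 0 := by
    have : (p2 - q) / p2 = 1 - q / p2 := by field_simp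
    rw [this]; linarith [hsum]
  -- the key algebraic identity
  have eX : ∀ (p' : ℝ), 0 < p' → ∀ (m' l' : ℝ), 0 < m' → 0 < l' → 0 < p' - q →
      (p' * (κ * (M' / (m' / 2)) ^ q) * (l' ^ (p' - q) / (p' - q))) ^ (1 / p') =
      (p' * (κ * 2 ^ q) / (p' - q)) ^ (1 / p') *
        (M' ^ (q / p') * (m' ^ (q / p'))⁻¹ * l' ^ ((p' - q) / p')) := by
    intro p' hp' m' l' hm' hl' hp'q
    have hc0 : (0:ℝ) ≤ p' * (κ * 2 ^ q) / (p' - q) :=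
      le_of_lt (div_pos (by positivity) hp'q)
    have h2m : M' / (m' / 2) = 2 * (M' / m') := by field_simp
    rw [h2m, Real.mul_rpow (by norm_num : (0:ℝ) ≤ 2) (by positivity),
      show p' * (κ * (2 ^ q * (M' / m') ^ q)) * (l' ^ (p' - q) / (p' - q)) =
        (p' * (κ * 2 ^ q) / (p' - q)) * ((M' / m') ^ q * l' ^ (p' - q)) from by ring,
      Real.mul_rpow hc0 (by positivity)]
    congr 1
    rw [Real.mul_rpow (by positivity) (by positivity),
      Real.div_rpow hM'pos.le hm'.le,
      Real.div_rpow (Real.rpow_nonneg hM'pos.le _) (Real.rpow_nonneg hm'.le _),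
      ← Real.rpow_mul hM'pos.le, ← Real.rpow_mul hm'.le, ← Real.rpow_mul hl'.le]
    rw [show q * (1/p') = q / p' from by ring, show (p' - q) * (1/p') = (p' - q) / p' from by ring,
      div_eq_mul_inv]
  have hXX : X1 * X2 = C * M' := by
    rw [hX1def, hX2def, eX p1 hp1 mu lam hmu hlam hp1q, eX p2 hp2 lam mu hlam hmu hp2q]
    have hM1 : M' ^ (q/p1) * M' ^ (q/p2) = M' := by
      rw [← Real.rpow_add hM'pos, hsum, Real.rpow_one]
    have hl1 : lam ^ ((p1-q)/p1) * (lam ^ (q/p2))⁻¹ = 1 := by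
      rw [← Real.rpow_neg hlam.le, ← Real.rpow_add hlam, hexp1, Real.rpow_zero]
    have hm1 : mu ^ ((p2-q)/p2) * (mu ^ (q/p1))⁻¹ = 1 := by
      rw [← Real.rpow_neg hmu.le, ← Real.rpow_add hmu, hexp2, Real.rpow_zero]
    calc ((p1 * (κ * 2 ^ q) / (p1 - q)) ^ (1/p1) *
          (M' ^ (q/p1) * (mu ^ (q/p1))⁻¹ * lam ^ ((p1-q)/p1))) *
        ((p2 * (κ * 2 ^ q) / (p2 - q)) ^ (1/p2) *
          (M' ^ (q/p2) * (lam ^ (q/p2))⁻¹ * mu ^ ((p2-q)/p2)))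
        = ((p1 * (κ * 2 ^ q) / (p1 - q)) ^ (1/p1) *
            (p2 * (κ * 2 ^ q) / (p2 - q)) ^ (1/p2)) *
          ((M' ^ (q/p1) * M' ^ (q/p2)) * ((lam ^ ((p1-q)/p1) * (lam ^ (q/p2))⁻¹) *
            (mu ^ ((p2-q)/p2) * (mu ^ (q/p1))⁻¹))) := by ring
      _ = C * M' := by rw [hM1, hl1, hm1, hCdef]; ring
  calc strongNorm (volume : Measure (Euc n)) p1 f * strongNorm (volume : Measure (Euc n)) p2 g
      ≤ ENNReal.ofReal X1 * ENNReal.ofReal X2 := mul_le_mul' hNf hNg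
    _ = ENNReal.ofReal (X1 * X2) := (ENNReal.ofReal_mul hX1nn).symm
    _ = ENNReal.ofReal C * M := by
        rw [hXX, ENNReal.ofReal_mul hC.le, hM'def, ENNReal.ofReal_toReal hMtop]
end
end

section
/- Fractional integral bound in iterated weak norms: let γ > 0 and 0 < q1 ≤ p1 < ∞, 0 < q2 ≤ p2 < ∞ satisfy the homogeneity condition 1/q1 + 1/q2 = 1/p1 + 1/p2 + γ/n. Define, for a non-negative measurable function f on ℝ^n × ℝ^n, (T_γ f)(x,y) = f(x,y) / (|x+y| + |x−y|)^γ with |·| the Euclidean norm. Then there exists a constant C depending only on p1, p2, q1, q2, n such that ‖T_γ f‖_{L^{q2,∞}(L^{q1,∞})} ≤ C · ‖f‖_{L^{p2,∞}(L^{p1,∞})} for all such f. -/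
open MeasureTheory ENNReal Filter Topology Set

noncomputable section

lemma euc_nontrivial (n : ℕ) (hn : 0 < n) : Nontrivial (Euc n) :=
  ⟨⟨EuclideanSpace.single ⟨0, hn⟩ (1:ℝ), 0, by
    intro h
    have := congrArg (fun v : Euc n => v ⟨0, hn⟩) h
    simp [EuclideanSpace.single_apply] at this⟩⟩

lemma vol_le_of_sup {α : Type*} [MeasurableSpace α] (μ : Measure α) (p : ℝ) (hp : 0 < p)
    (G : α → ℝ≥0∞) (M : ℝ≥0∞)
    (hM : (⨆ (l : ℝ) (_ : 0 < l), ENNReal.ofReal l * μ {y | ENNReal.ofReal l < G y} ^ (1/p)) ≤ M)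
    (l : ℝ) (hl : 0 < l) :
    μ {y | ENNReal.ofReal l < G y} ≤ (M / ENNReal.ofReal l) ^ p := by
  have h1 : ENNReal.ofReal l * μ {y | ENNReal.ofReal l < G y} ^ (1/p) ≤ M := by
    refine le_trans ?_ hM
    exact le_iSup₂_of_le l hl le_rfl
  have h2 : μ {y | ENNReal.ofReal l < G y} ^ (1/p) ≤ M / ENNReal.ofReal l :=
    (ENNReal.le_div_iff_mul_le (Or.inl (by simp [hl])) (Or.inl ENNReal.ofReal_ne_top)).mpr
      (by rwa [mul_comm])
  calc μ {y | ENNReal.ofReal l < G y}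
      = (μ {y | ENNReal.ofReal l < G y} ^ (1/p)) ^ p := by
        rw [← ENNReal.rpow_mul, one_div, inv_mul_cancel₀ hp.ne', ENNReal.rpow_one]
    _ ≤ (M / ENNReal.ofReal l) ^ p := ENNReal.rpow_le_rpow h2 hp.le

private lemma keyA (n : ℕ) (hn : 0 < n) (p q a : ℝ) (hp : 0 < p) (hq : 0 < q) (ha : 0 ≤ a)
    (hpq : 1/q = 1/p + a/(n:ℝ)) :
    ∃ C : ℝ≥0∞, C ≠ 0 ∧ C ≠ ∞ ∧ ∀ G : Euc n → ℝ≥0∞,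
      (⨆ (l : ℝ) (_ : 0 < l), ENNReal.ofReal l *
          volume {y : Euc n | ENNReal.ofReal l < ENNReal.ofReal ‖y‖ ^ (-a) * G y} ^ (1/q))
        ≤ C * ⨆ (l : ℝ) (_ : 0 < l), ENNReal.ofReal l *
          volume {y : Euc n | ENNReal.ofReal l < G y} ^ (1/p) := by
  have hnR : (0:ℝ) < n := Nat.cast_pos.mpr hn
  rcases eq_or_lt_of_le ha with ha0 | ha0
  · -- a = 0, q = p
    have hqp : q = p := by
      have h1 : (1:ℝ)/q = 1/p := by rw [hpq, ← ha0]; simp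
      rw [div_eq_div_iff hq.ne' hp.ne'] at h1; linarith
    refine ⟨1, one_ne_zero, one_ne_top, fun G => ?_⟩
    rw [one_mul, hqp]
    refine le_of_eq (iSup_congr fun l => iSup_congr fun hl => ?_)
    have hset : {y : Euc n | ENNReal.ofReal l < ENNReal.ofReal ‖y‖ ^ (-a) * G y}
        = {y : Euc n | ENNReal.ofReal l < G y} := by
      ext y
      simp [← ha0]
    rw [hset]
  · -- a > 0
    haveI := euc_nontrivial n hn
    have hCpos : (0:ℝ≥0∞) < volume (Metric.ball (0:Euc n) 1) + ENNReal.ofReal (2^p) :=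
      lt_of_lt_of_le (ENNReal.ofReal_pos.mpr (by positivity)) le_add_self
    have hCfin : volume (Metric.ball (0:Euc n) 1) + ENNReal.ofReal (2^p) ≠ ∞ :=
      ENNReal.add_ne_top.mpr ⟨measure_ball_lt_top.ne, ENNReal.ofReal_ne_top⟩
    refine ⟨(volume (Metric.ball (0:Euc n) 1) + ENNReal.ofReal (2^p)) ^ (1/q),
      (ENNReal.rpow_pos hCpos hCfin).ne', ENNReal.rpow_ne_top_of_nonneg (by positivity) hCfin,
      fun G => ?_⟩
    set V1 := volume (Metric.ball (0:Euc n) 1) with hV1def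
    set M := ⨆ (l : ℝ) (_ : 0 < l), ENNReal.ofReal l *
        volume {y : Euc n | ENNReal.ofReal l < G y} ^ (1/p) with hMdef
    by_cases hMtop : M = ∞
    · rw [hMtop, ENNReal.mul_top (ENNReal.rpow_pos hCpos hCfin).ne']
      exact le_top
    by_cases hM0 : M = 0
    · refine iSup₂_le fun l hl => ?_
      have hU : volume (⋃ k : ℕ, {y : Euc n | ENNReal.ofReal (1/((k:ℝ)+1)) < G y}) = 0 := by
        refine measure_iUnion_null fun k => ?_
        have h5 := vol_le_of_sup volume p hp G M le_rfl (1/((k:ℝ)+1)) (by positivity)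
        rw [hM0, ENNReal.zero_div, ENNReal.zero_rpow_of_pos hp] at h5
        exact le_zero_iff.mp h5
      have hsub : {y : Euc n | ENNReal.ofReal l < ENNReal.ofReal ‖y‖ ^ (-a) * G y}
          ⊆ ⋃ k : ℕ, {y : Euc n | ENNReal.ofReal (1/((k:ℝ)+1)) < G y} := by
        intro y hy
        simp only [mem_setOf_eq] at hy
        have hG0 : G y ≠ 0 := by
          intro h
          rw [h, mul_zero] at hy
          exact ENNReal.not_lt_zero hy
        obtain ⟨k, hk⟩ := ENNReal.exists_inv_nat_lt hG0
        have hk0 : k ≠ 0 := by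
          rintro rfl
          rw [Nat.cast_zero, ENNReal.inv_zero] at hk
          exact not_top_lt hk
        have hkpos : (0:ℝ) < k := by exact_mod_cast Nat.pos_of_ne_zero hk0
        refine mem_iUnion.mpr ⟨k, ?_⟩
        simp only [mem_setOf_eq]
        refine lt_of_le_of_lt ?_ hk
        rw [one_div, ← ENNReal.ofReal_natCast k, ← ENNReal.ofReal_inv_of_pos hkpos]
        exact ENNReal.ofReal_le_ofReal (by
          rw [inv_le_inv₀ (by positivity) hkpos]; linarith)
      rw [measure_mono_null hsub hU, ENNReal.zero_rpow_of_pos (by positivity), mul_zero]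
      exact zero_le
    -- main case : 0 < M < ∞
    have hm : 0 < M.toReal := ENNReal.toReal_pos hM0 hMtop
    set m := M.toReal with hmdef
    have hMcoe : ENNReal.ofReal m = M := ENNReal.ofReal_toReal hMtop
    refine iSup₂_le fun l hl => ?_
    have hd : 0 < (n:ℝ) + a*p := by positivity
    set t := m / l with htdef
    have htpos : 0 < t := div_pos hm hl
    set e := p / ((n:ℝ) + a*p) with hedef
    have he : 0 < e := by positivity
    set r := t ^ e with hrdef
    have hr : 0 < r := Real.rpow_pos_of_pos htpos e
    set lam := l * r ^ a / 2 with hlamdef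
    have hlam : 0 < lam := by positivity
    have hsub : {y : Euc n | ENNReal.ofReal l < ENNReal.ofReal ‖y‖ ^ (-a) * G y}
        ⊆ Metric.ball (0:Euc n) r ∪ {y : Euc n | ENNReal.ofReal lam < G y} := by
      intro y hy
      simp only [mem_setOf_eq] at hy
      by_cases hyr : ‖y‖ < r
      · exact Or.inl (mem_ball_zero_iff.mpr hyr)
      · push_neg at hyr
        right
        have hclaim : ENNReal.ofReal (l * r ^ a) ≤ G y := by
          by_contra hcon
          push_neg at hcon
          have h1 : ENNReal.ofReal ‖y‖ ^ (-a) ≤ ENNReal.ofReal (r ^ (-a)) := by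
            rw [← ENNReal.ofReal_rpow_of_pos hr, ENNReal.rpow_neg, ENNReal.rpow_neg]
            exact ENNReal.inv_le_inv.mpr
              (ENNReal.rpow_le_rpow (ENNReal.ofReal_le_ofReal hyr) ha)
          have h2 : ENNReal.ofReal ‖y‖ ^ (-a) * G y
              < ENNReal.ofReal (r ^ (-a)) * ENNReal.ofReal (l * r ^ a) := by
            refine lt_of_le_of_lt (mul_le_mul_left h1 _) ?_
            exact (ENNReal.mul_lt_mul_iff_right (by simp [Real.rpow_pos_of_pos hr])
              ENNReal.ofReal_ne_top).mpr hcon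
          have h3 : ENNReal.ofReal (r ^ (-a)) * ENNReal.ofReal (l * r ^ a)
              = ENNReal.ofReal l := by
            rw [← ENNReal.ofReal_mul (by positivity)]
            congr 1
            rw [Real.rpow_neg hr.le]
            have hrane : r ^ a ≠ 0 := (Real.rpow_pos_of_pos hr a).ne'
            field_simp
          rw [h3] at h2
          exact lt_irrefl _ (hy.trans h2)
        have hlt : ENNReal.ofReal lam < ENNReal.ofReal (l * r ^ a) :=
          (ENNReal.ofReal_lt_ofReal_iff_of_nonneg hlam.le).mpr (by
            rw [hlamdef]
            exact half_lt_self (by positivity))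
        exact mem_setOf_eq ▸ lt_of_lt_of_le hlt hclaim
    have hball : volume (Metric.ball (0:Euc n) r) = ENNReal.ofReal (r ^ n) * V1 := by
      rw [hV1def, Measure.addHaar_ball _ _ hr.le, finrank_euclideanSpace_fin]
    have hvol : volume {y : Euc n | ENNReal.ofReal l < ENNReal.ofReal ‖y‖ ^ (-a) * G y}
        ≤ ENNReal.ofReal (r ^ n) * V1 + (M / ENNReal.ofReal lam) ^ p := by
      refine le_trans (measure_mono hsub) (le_trans (measure_union_le _ _) ?_)
      exact add_le_add hball.le (vol_le_of_sup volume p hp G M le_rfl lam hlam)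
    -- arithmetic
    have key1 : r ^ n = t ^ (e * (n:ℝ)) := by
      rw [hrdef, ← Real.rpow_natCast (t ^ e) n, ← Real.rpow_mul htpos.le]
    have hra : r ^ a = t ^ (e * a) := by
      rw [hrdef, ← Real.rpow_mul htpos.le]
    have hexp2 : (1 - e*a) * p = e * (n:ℝ) := by
      rw [hedef]; field_simp; ring
    have htea : (0:ℝ) < t ^ (e * a) := Real.rpow_pos_of_pos htpos _
    have key2 : (M / ENNReal.ofReal lam) ^ p = ENNReal.ofReal (2^p * t ^ (e * (n:ℝ))) := by
      rw [← hMcoe, ← ENNReal.ofReal_div_of_pos hlam, ENNReal.ofReal_rpow_of_pos (by positivity)]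
      congr 1
      have h4 : m / lam = 2 * t ^ (1 - e * a) := by
        rw [hlamdef, hra, Real.rpow_sub htpos, Real.rpow_one, htdef]
        have h5 : ((m/l) ^ (e*a)) ≠ 0 := by
          rw [htdef] at htea; exact htea.ne'
        field_simp
      rw [h4, Real.mul_rpow (by norm_num) (Real.rpow_pos_of_pos htpos _).le,
        ← Real.rpow_mul htpos.le, hexp2]
    have hexp1 : e * (n:ℝ) * (1/q) = 1 := by
      have hq_inv : 1/q = ((n:ℝ) + a*p)/(p*(n:ℝ)) := by
        rw [hpq]; field_simp
      rw [hq_inv, hedef]; field_simp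
    have key3 : (ENNReal.ofReal (t ^ (e * (n:ℝ)))) ^ (1/q) = ENNReal.ofReal t := by
      rw [ENNReal.ofReal_rpow_of_pos (Real.rpow_pos_of_pos htpos _),
        ← Real.rpow_mul htpos.le, hexp1, Real.rpow_one]
    have hltm : l * t = m := by rw [htdef]; field_simp
    calc ENNReal.ofReal l *
        volume {y : Euc n | ENNReal.ofReal l < ENNReal.ofReal ‖y‖ ^ (-a) * G y} ^ (1/q)
        ≤ ENNReal.ofReal l * (ENNReal.ofReal (r ^ n) * V1 + (M / ENNReal.ofReal lam) ^ p) ^ (1/q) :=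
          mul_le_mul_right (ENNReal.rpow_le_rpow hvol (by positivity)) _
      _ = ENNReal.ofReal l * (ENNReal.ofReal (t ^ (e * (n:ℝ))) * (V1 + ENNReal.ofReal (2^p))) ^ (1/q) := by
          rw [key1, key2, ENNReal.ofReal_mul (by positivity)]
          ring_nf
      _ = ENNReal.ofReal l * (ENNReal.ofReal (t ^ (e * (n:ℝ)))) ^ (1/q) * (V1 + ENNReal.ofReal (2^p)) ^ (1/q) := by
          rw [ENNReal.mul_rpow_of_nonneg _ _ (by positivity), mul_assoc]
      _ = (V1 + ENNReal.ofReal (2^p)) ^ (1/q) * M := by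
          rw [key3, ← ENNReal.ofReal_mul hl.le, hltm, hMcoe, mul_comm]

lemma levelSet_mul {α : Type*} (c : ℝ≥0∞) (hc0 : c ≠ 0) (hcT : c ≠ ∞) (H : α → ℝ≥0∞)
    (l : ℝ) : {y : α | ENNReal.ofReal (c.toReal * l) < c * H y} = {y | ENNReal.ofReal l < H y} := by
  have hc' : 0 < c.toReal := ENNReal.toReal_pos hc0 hcT
  ext y
  simp only [mem_setOf_eq]
  rw [ENNReal.ofReal_mul hc'.le, ENNReal.ofReal_toReal hcT]
  exact ENNReal.mul_lt_mul_iff_right hc0 hcT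

lemma weakSup_mul {α : Type*} [MeasurableSpace α] (μ : Measure α) (c : ℝ≥0∞)
    (hc0 : c ≠ 0) (hcT : c ≠ ∞) (H : α → ℝ≥0∞) (e : ℝ) :
    (⨆ (l : ℝ) (_ : 0 < l), ENNReal.ofReal l * μ {y | ENNReal.ofReal l < c * H y} ^ e)
      = c * ⨆ (l : ℝ) (_ : 0 < l), ENNReal.ofReal l * μ {y | ENNReal.ofReal l < H y} ^ e := by
  have hc' : 0 < c.toReal := ENNReal.toReal_pos hc0 hcT
  have hcoe : ENNReal.ofReal c.toReal = c := ENNReal.ofReal_toReal hcT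
  simp only [ENNReal.mul_iSup]
  apply le_antisymm
  · refine iSup₂_le fun l hl => ?_
    have hl' : 0 < l / c.toReal := div_pos hl hc'
    have hll : c.toReal * (l / c.toReal) = l := by field_simp
    refine le_iSup₂_of_le (l / c.toReal) hl' (le_of_eq ?_)
    conv_lhs => rw [← hll]
    rw [levelSet_mul c hc0 hcT H, ENNReal.ofReal_mul hc'.le, hcoe, mul_assoc]
  · refine iSup₂_le fun l hl => ?_
    refine le_iSup₂_of_le (c.toReal * l) (by positivity) (le_of_eq ?_)
    rw [levelSet_mul c hc0 hcT H, ENNReal.ofReal_mul hc'.le, hcoe, mul_assoc]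


lemma pointwise_incl (n : ℕ) (γ γ1 γ2 : ℝ) (hγ1 : 0 ≤ γ1) (hγ2 : 0 ≤ γ2) (hsum : γ1 + γ2 = γ)
    (f : Euc n × Euc n → ℝ) (hf0 : ∀ z, 0 ≤ f z) (y : Euc n) (hy : 0 < ‖y‖)
    (l : ℝ) (hl : 0 < l) (x : Euc n)
    (hx : l < |f (x, y) / (‖x + y‖ + ‖x - y‖) ^ γ|) :
    ENNReal.ofReal l < ENNReal.ofReal ((2:ℝ) ^ (-γ) * ‖y‖ ^ (-γ2)) *
      (ENNReal.ofReal ‖x‖ ^ (-γ1) * ENNReal.ofReal (f (x, y))) := by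
  have hγ0 : 0 ≤ γ := by linarith
  set D := ‖x + y‖ + ‖x - y‖ with hDdef
  have hDy : 2 * ‖y‖ ≤ D := by
    have h1 : ‖(x + y) - (x - y)‖ ≤ ‖x + y‖ + ‖x - y‖ := norm_sub_le _ _
    have h2 : (x + y) - (x - y) = (2:ℝ) • y := by
      rw [two_smul]; abel
    rw [h2, norm_smul] at h1
    simpa using h1
  have hDx : 2 * ‖x‖ ≤ D := by
    have h1 : ‖(x + y) + (x - y)‖ ≤ ‖x + y‖ + ‖x - y‖ := norm_add_le _ _
    have h2 : (x + y) + (x - y) = (2:ℝ) • x := by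
      rw [two_smul]; abel
    rw [h2, norm_smul] at h1
    simpa using h1
  have hD : 0 < D := lt_of_lt_of_le (by positivity) hDy
  have hDγ : 0 < D ^ γ := Real.rpow_pos_of_pos hD γ
  rw [abs_of_nonneg (div_nonneg (hf0 _) hDγ.le)] at hx
  have hf : l * D ^ γ < f (x, y) := (lt_div_iff₀ hDγ).mp hx
  have hfpos : 0 < f (x, y) := lt_trans (by positivity) hf
  have hDsplit : (2*‖x‖) ^ γ1 * (2*‖y‖) ^ γ2 ≤ D ^ γ := by
    rw [← hsum, Real.rpow_add hD]
    exact mul_le_mul (Real.rpow_le_rpow (by positivity) hDx hγ1)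
      (Real.rpow_le_rpow (by positivity) hDy hγ2)
      (by positivity) (by positivity)
  have hf2 : l * ((2*‖x‖) ^ γ1 * (2*‖y‖) ^ γ2) < f (x, y) :=
    lt_of_le_of_lt (mul_le_mul_of_nonneg_left hDsplit hl.le) hf
  by_cases hx0 : ‖x‖ = 0
  · rcases eq_or_lt_of_le hγ1 with hγ10 | hγ10
    · -- γ1 = 0
      rw [← hγ10, neg_zero, ENNReal.rpow_zero, one_mul,
        ← ENNReal.ofReal_mul (by positivity)]
      rw [ENNReal.ofReal_lt_ofReal_iff_of_nonneg hl.le]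
      have hγ2γ : γ2 = γ := by linarith
      have hc : (0:ℝ) < (2:ℝ) ^ (-γ) * ‖y‖ ^ (-γ2) := by positivity
      have h1 : ((2*‖y‖) ^ γ2) * ((2:ℝ) ^ (-γ) * ‖y‖ ^ (-γ2)) = 1 := by
        rw [Real.mul_rpow (by norm_num) hy.le, ← hγ2γ, Real.rpow_neg (by norm_num),
          Real.rpow_neg hy.le]
        have e1 : ((2:ℝ) ^ γ2) ≠ 0 := (Real.rpow_pos_of_pos (by norm_num) _).ne'
        have e2 : (‖y‖ ^ γ2) ≠ 0 := (Real.rpow_pos_of_pos hy _).ne'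
        field_simp
      have hf3 : l * (2*‖y‖) ^ γ2 < f (x, y) := by
        have : (2*‖x‖) ^ γ1 = 1 := by rw [← hγ10, Real.rpow_zero]
        rw [this, one_mul] at hf2; exact hf2
      calc l = l * (((2*‖y‖) ^ γ2) * ((2:ℝ) ^ (-γ) * ‖y‖ ^ (-γ2))) := by rw [h1, mul_one]
        _ = (l * (2*‖y‖) ^ γ2) * ((2:ℝ) ^ (-γ) * ‖y‖ ^ (-γ2)) := by ring
        _ < f (x, y) * ((2:ℝ) ^ (-γ) * ‖y‖ ^ (-γ2)) := mul_lt_mul_of_pos_right hf3 hc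
        _ = ((2:ℝ) ^ (-γ) * ‖y‖ ^ (-γ2)) * f (x, y) := by ring
    · -- γ1 > 0, weight = ∞
      have hw : ENNReal.ofReal ‖x‖ ^ (-γ1) = ∞ := by
        rw [hx0, ENNReal.ofReal_zero]
        exact ENNReal.zero_rpow_of_neg (by linarith)
      rw [hw, ENNReal.top_mul (ENNReal.ofReal_pos.mpr hfpos).ne',
        ENNReal.mul_top (ENNReal.ofReal_pos.mpr (by positivity : (0:ℝ) < (2:ℝ) ^ (-γ) * ‖y‖ ^ (-γ2))).ne']
      exact ENNReal.ofReal_lt_top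
  · -- x ≠ 0
    have hx' : 0 < ‖x‖ := lt_of_le_of_ne (norm_nonneg x) (Ne.symm hx0)
    rw [ENNReal.ofReal_rpow_of_pos hx', ← ENNReal.ofReal_mul (by positivity),
      ← ENNReal.ofReal_mul (by positivity)]
    rw [ENNReal.ofReal_lt_ofReal_iff_of_nonneg hl.le]
    have hc : (0:ℝ) < (2:ℝ) ^ (-γ) * ‖y‖ ^ (-γ2) * ‖x‖ ^ (-γ1) := by positivity
    have h1 : ((2*‖x‖) ^ γ1 * (2*‖y‖) ^ γ2) * ((2:ℝ) ^ (-γ) * ‖y‖ ^ (-γ2) * ‖x‖ ^ (-γ1)) = 1 := by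
      rw [Real.mul_rpow (by norm_num) hx'.le, Real.mul_rpow (by norm_num) hy.le,
        ← hsum, Real.rpow_neg (by norm_num : (0:ℝ) ≤ 2), Real.rpow_add (by norm_num : (0:ℝ) < 2),
        Real.rpow_neg hy.le, Real.rpow_neg hx'.le]
      have e1 : ((2:ℝ) ^ γ1) ≠ 0 := (Real.rpow_pos_of_pos (by norm_num) _).ne'
      have e2 : ((2:ℝ) ^ γ2) ≠ 0 := (Real.rpow_pos_of_pos (by norm_num) _).ne'
      have e3 : (‖y‖ ^ γ2) ≠ 0 := (Real.rpow_pos_of_pos hy _).ne'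
      have e4 : (‖x‖ ^ γ1) ≠ 0 := (Real.rpow_pos_of_pos hx' _).ne'
      field_simp
    calc l = l * (((2*‖x‖) ^ γ1 * (2*‖y‖) ^ γ2) * ((2:ℝ) ^ (-γ) * ‖y‖ ^ (-γ2) * ‖x‖ ^ (-γ1))) := by
          rw [h1, mul_one]
      _ = (l * ((2*‖x‖) ^ γ1 * (2*‖y‖) ^ γ2)) * ((2:ℝ) ^ (-γ) * ‖y‖ ^ (-γ2) * ‖x‖ ^ (-γ1)) := by ring
      _ < f (x, y) * ((2:ℝ) ^ (-γ) * ‖y‖ ^ (-γ2) * ‖x‖ ^ (-γ1)) := mul_lt_mul_of_pos_right hf2 hc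
      _ = (2:ℝ) ^ (-γ) * ‖y‖ ^ (-γ2) * (‖x‖ ^ (-γ1) * f (x, y)) := by ring

/-- Fractional integral bound in iterated weak norms: let `γ > 0`,
`0 < q1 ≤ p1 < ∞`, `0 < q2 ≤ p2 < ∞` with `1/q1 + 1/q2 = 1/p1 + 1/p2 + γ/n`, and set
`(T_γ f)(x,y) = f(x,y)/(|x+y| + |x−y|)^γ`.  Then there is a constant
`C = C(p1, p2, q1, q2, n) > 0` with
`‖T_γ f‖_{L^{q2,∞}(L^{q1,∞})} ≤ C·‖f‖_{L^{p2,∞}(L^{p1,∞})}` for every non-negative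
measurable `f` on `ℝ^n × ℝ^n`. -/
theorem stmt19 (n : ℕ) (hn : 0 < n) (γ p1 p2 q1 q2 : ℝ) (hγ : 0 < γ)
    (hq1 : 0 < q1) (hq2 : 0 < q2) (hq1p1 : q1 ≤ p1) (hq2p2 : q2 ≤ p2)
    (hhom : 1 / q1 + 1 / q2 = 1 / p1 + 1 / p2 + γ / (n : ℝ)) :
    ∃ C : ℝ, 0 < C ∧ ∀ f : Euc n × Euc n → ℝ, Measurable f → (∀ z, 0 ≤ f z) →
      iteratedWeakNorm q1 q2
          (fun z => f z / (‖z.1 + z.2‖ + ‖z.1 - z.2‖) ^ γ) ≤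
        ENNReal.ofReal C * iteratedWeakNorm p1 p2 f := by
  have hnR : (0:ℝ) < n := Nat.cast_pos.mpr hn
  have hn' : (n:ℝ) ≠ 0 := hnR.ne'
  have hp1 : 0 < p1 := lt_of_lt_of_le hq1 hq1p1
  have hp2 : 0 < p2 := lt_of_lt_of_le hq2 hq2p2
  set γ1 := (n:ℝ) * (1/q1 - 1/p1) with hγ1def
  set γ2 := (n:ℝ) * (1/q2 - 1/p2) with hγ2def
  have hiq1 : 1/p1 ≤ 1/q1 := one_div_le_one_div_of_le hq1 hq1p1
  have hiq2 : 1/p2 ≤ 1/q2 := one_div_le_one_div_of_le hq2 hq2p2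
  have hγ1 : 0 ≤ γ1 := mul_nonneg hnR.le (by linarith)
  have hγ2 : 0 ≤ γ2 := mul_nonneg hnR.le (by linarith)
  have hdiv1 : γ1/(n:ℝ) = 1/q1 - 1/p1 := by
    rw [hγ1def]; exact mul_div_cancel_left₀ _ hn'
  have hdiv2 : γ2/(n:ℝ) = 1/q2 - 1/p2 := by
    rw [hγ2def]; exact mul_div_cancel_left₀ _ hn'
  have hpq1 : 1/q1 = 1/p1 + γ1/(n:ℝ) := by rw [hdiv1]; ring
  have hpq2 : 1/q2 = 1/p2 + γ2/(n:ℝ) := by rw [hdiv2]; ring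
  have hsum : γ1 + γ2 = γ := by
    have h1 : γ1 + γ2 = (n:ℝ) * ((1/q1 + 1/q2) - (1/p1 + 1/p2)) := by
      rw [hγ1def, hγ2def]; ring
    rw [h1, hhom]
    field_simp
    ring
  obtain ⟨C1, hC10, hC1T, hC1⟩ := keyA n hn p1 q1 γ1 hp1 hq1 hγ1 hpq1
  obtain ⟨C2, hC20, hC2T, hC2⟩ := keyA n hn p2 q2 γ2 hp2 hq2 hγ2 hpq2
  have h2γ : (0:ℝ) < (2:ℝ)^(-γ) := Real.rpow_pos_of_pos two_pos _
  set E := ENNReal.ofReal ((2:ℝ)^(-γ)) * C1 with hEdef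
  have hE0 : E ≠ 0 := mul_ne_zero (ENNReal.ofReal_pos.mpr h2γ).ne' hC10
  have hET : E ≠ ∞ := ENNReal.mul_ne_top ENNReal.ofReal_ne_top hC1T
  have htotT : E * C2 ≠ ∞ := ENNReal.mul_ne_top hET hC2T
  refine ⟨(E * C2).toReal + 1, by positivity, fun f hfm hf0 => ?_⟩
  have hStot : E * C2 ≤ ENNReal.ofReal ((E * C2).toReal + 1) := by
    rw [← ENNReal.ofReal_toReal htotT]
    exact ENNReal.ofReal_le_ofReal (by
      rw [ENNReal.toReal_ofReal ENNReal.toReal_nonneg]; linarith)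
  refine le_trans ?_ (mul_le_mul_left hStot _)
  -- inner bound
  have hinner : ∀ y : Euc n, y ≠ 0 →
      (weakNorm volume q1 fun x => f (x, y) / (‖x + y‖ + ‖x - y‖) ^ γ)
        ≤ E * ((ENNReal.ofReal ‖y‖) ^ (-γ2) * weakNorm volume p1 fun x => f (x, y)) := by
    intro y hy0
    have hy : 0 < ‖y‖ := norm_pos_iff.mpr hy0
    have hcy : (0:ℝ) < (2:ℝ)^(-γ) * ‖y‖^(-γ2) := by positivity
    have step1 : (weakNorm volume q1 fun x => f (x, y) / (‖x + y‖ + ‖x - y‖) ^ γ)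
        ≤ ⨆ (l:ℝ) (_:0<l), ENNReal.ofReal l * volume {x : Euc n |
            ENNReal.ofReal l < ENNReal.ofReal ((2:ℝ)^(-γ) * ‖y‖^(-γ2)) *
              (ENNReal.ofReal ‖x‖ ^ (-γ1) * ENNReal.ofReal (f (x, y)))} ^ (1/q1) := by
      simp only [weakNorm]
      refine iSup₂_mono fun l hl => ?_
      refine mul_le_mul_right (ENNReal.rpow_le_rpow (measure_mono ?_) (by positivity)) _
      intro x hx
      exact pointwise_incl n γ γ1 γ2 hγ1 hγ2 hsum f hf0 y hy l hl x hx
    have step2 : (⨆ (l:ℝ) (_:0<l), ENNReal.ofReal l * volume {x : Euc n |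
            ENNReal.ofReal l < ENNReal.ofReal ((2:ℝ)^(-γ) * ‖y‖^(-γ2)) *
              (ENNReal.ofReal ‖x‖ ^ (-γ1) * ENNReal.ofReal (f (x, y)))} ^ (1/q1))
        = ENNReal.ofReal ((2:ℝ)^(-γ) * ‖y‖^(-γ2)) *
          ⨆ (l:ℝ) (_:0<l), ENNReal.ofReal l * volume {x : Euc n |
            ENNReal.ofReal l < ENNReal.ofReal ‖x‖ ^ (-γ1) * ENNReal.ofReal (f (x, y))} ^ (1/q1) :=
      weakSup_mul volume _ (ENNReal.ofReal_pos.mpr hcy).ne' ENNReal.ofReal_ne_top _ _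
    have step3 := hC1 (fun x => ENNReal.ofReal (f (x, y)))
    have step4 : (⨆ (l:ℝ) (_:0<l), ENNReal.ofReal l * volume {x : Euc n |
          ENNReal.ofReal l < ENNReal.ofReal (f (x, y))} ^ (1/p1))
        = weakNorm volume p1 fun x => f (x, y) := by
      simp only [weakNorm]
      refine iSup_congr fun l => iSup_congr fun hl => ?_
      have hseteq : {x : Euc n | ENNReal.ofReal l < ENNReal.ofReal (f (x, y))}
          = {x : Euc n | l < |f (x, y)|} := by
        ext x
        simp only [mem_setOf_eq]
        rw [abs_of_nonneg (hf0 _), ENNReal.ofReal_lt_ofReal_iff_of_nonneg hl.le]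
      rw [hseteq]
    refine le_trans step1 (le_of_eq_of_le step2 ?_)
    have step5 : (⨆ (l:ℝ) (_:0<l), ENNReal.ofReal l * volume {x : Euc n |
            ENNReal.ofReal l < ENNReal.ofReal ‖x‖ ^ (-γ1) * ENNReal.ofReal (f (x, y))} ^ (1/q1))
        ≤ C1 * weakNorm volume p1 fun x => f (x, y) := by
      rw [← step4]
      exact step3
    refine le_trans (mul_le_mul_right step5 _) (le_of_eq ?_)
    rw [hEdef, ENNReal.ofReal_mul h2γ.le, ENNReal.ofReal_rpow_of_pos hy]
    ring
  -- outer bound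
  haveI := euc_nontrivial n hn
  have h0 : volume ({(0:Euc n)} : Set (Euc n)) = 0 := measure_singleton 0
  simp only [iteratedWeakNorm]
  calc (⨆ (l:ℝ) (_:0<l), ENNReal.ofReal l * volume {y : Euc n |
        ENNReal.ofReal l < weakNorm volume q1 fun x =>
          f (x, y) / (‖x + y‖ + ‖x - y‖) ^ γ} ^ (1/q2))
      ≤ ⨆ (l:ℝ) (_:0<l), ENNReal.ofReal l * volume {y : Euc n |
          ENNReal.ofReal l < E * (ENNReal.ofReal ‖y‖ ^ (-γ2) *
            weakNorm volume p1 fun x => f (x, y))} ^ (1/q2) := by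
        refine iSup₂_mono fun l hl =>
          mul_le_mul_right (ENNReal.rpow_le_rpow ?_ (by positivity)) _
        have hsub : {y : Euc n | ENNReal.ofReal l < weakNorm volume q1 fun x =>
              f (x, y) / (‖x + y‖ + ‖x - y‖) ^ γ}
            ⊆ ({(0:Euc n)} : Set (Euc n)) ∪ {y : Euc n | ENNReal.ofReal l < E *
              (ENNReal.ofReal ‖y‖ ^ (-γ2) * weakNorm volume p1 fun x => f (x, y))} := by
          intro y hy
          by_cases hy0 : y = 0
          · exact Or.inl (by simp [hy0])
          · exact Or.inr (lt_of_lt_of_le hy (hinner y hy0))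
        refine le_trans (measure_mono hsub) (le_trans (measure_union_le _ _) ?_)
        rw [h0, zero_add]
    _ = E * ⨆ (l:ℝ) (_:0<l), ENNReal.ofReal l * volume {y : Euc n |
          ENNReal.ofReal l < ENNReal.ofReal ‖y‖ ^ (-γ2) *
            weakNorm volume p1 fun x => f (x, y)} ^ (1/q2) :=
        weakSup_mul volume E hE0 hET _ _
    _ ≤ E * (C2 * ⨆ (l:ℝ) (_:0<l), ENNReal.ofReal l * volume {y : Euc n |
          ENNReal.ofReal l < weakNorm volume p1 fun x => f (x, y)} ^ (1/p2)) :=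
        mul_le_mul_right (hC2 fun y => weakNorm volume p1 fun x => f (x, y)) _
    _ = E * C2 * ⨆ (l:ℝ) (_:0<l), ENNReal.ofReal l * volume {y : Euc n |
          ENNReal.ofReal l < weakNorm volume p1 fun x => f (x, y)} ^ (1/p2) := by
        rw [hEdef]
        ring
end
end
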